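/- arXiv:2407.07710 — 8 statements merged into one kernel-verified Lean document; each statement's English description precedes it below -/
import Mathlib

section
/- Let q = 3^m with m ≥ 1. Then the number of x ∈ F_q^* such that x, x+1, and x-1 are all nonzero squares in F_q is at most (q + 2√q + 9)/8. -/
/-!
Write χ for the quadratic character of `F`. Every counted `x` makes
`(1 + χ x) (1 + χ (x + 1)) (1 + χ (x - 1))` equal to `8`, and this product is never negative.
Expanding it, the sums of `χ (x + a)` vanish and those of `χ ((x + a) (x + b))`, `a ≠ b`, are
Jacobi sums equal to `-1`, so `8 N ≤ q - 3 + T` with `T = ∑ χ (x ^ 3 - x)`.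

In characteristic 3 the map `x ↦ x ^ 3 - x` is additive with kernel `𝔽₃`, so its image `H` has
index 3 and `T = 3 S 0`, where `S c = ∑_{t ∈ H} χ (t + c)`. The function `S` is constant on each of
the cosets `H`, `H + c`, `H - c`; its three values sum to `∑ χ = 0`, their squares sum to `2 q / 3`
by the second moment `∑_c S c ^ 2 = |H| (q - |H|)`, and `S (-c) = χ (-1) S c`. Hence either
`S 0 = 0` or `9 (S 0) ^ 2 = 4 q`, so `T ≤ 2 √q`.
-/

open Finset

theorem AddSubgroup.sum_eq_sum_add_add_of_index_eq_three {G M : Type*} [AddCommGroup G]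
    [Fintype G] [AddCommMonoid M] {H : AddSubgroup G} [Fintype H] (hH : H.index = 3) {c : G}
    (hc : c ∉ H) (g : G → M) : ∑ x, g x = ∑ t : H, (g t + g (t + c) + g (t - c)) := by
  have h3c : 3 • c ∈ H := hH ▸ H.nsmul_index_mem c
  have h2c : c + c ∉ H := fun h => hc <| by
    simpa [show 3 • c - (c + c) = c by abel] using H.sub_mem h3c h
  let v : Fin 3 → G := ![0, c, -c]
  have hv : ∀ i j, v i - v j ∈ H → i = j := by
    intro i j h
    fin_cases i <;> fin_cases j <;> simp [v] at h ⊢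
    all_goals first | exact hc h | exact h2c h | exact h2c (by simpa using H.neg_mem h)
  let f : H × Fin 3 → G := fun p => p.1 + v p.2
  have hf : Function.Bijective f := by
    rw [Fintype.bijective_iff_injective_and_card]
    refine ⟨?_, ?_⟩
    · rintro ⟨t, i⟩ ⟨s, j⟩ h
      obtain rfl := hv i j <| (sub_eq_sub_iff_add_eq_add.mpr ((add_comm _ _).trans h)).symm ▸
        H.sub_mem s.2 t.2
      simpa [f] using h
    · rw [Fintype.card_prod, Fintype.card_fin, ← Nat.card_eq_fintype_card,
        ← Nat.card_eq_fintype_card, ← H.index_mul_card, hH, mul_comm]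
  rw [← Fintype.sum_bijective f hf (g ∘ f) g fun _ => rfl, Fintype.sum_prod_type]
  simp [f, v, Fin.sum_univ_three, sub_eq_add_neg]

theorem AddMonoidHom.sum_comp_eq_card_ker_nsmul {G G' M : Type*} [AddGroup G] [Fintype G]
    [AddGroup G'] [AddCommMonoid M] (f : G →+ G') [Fintype f.range]
    (g : G' → M) : ∑ x, g (f x) = Nat.card f.ker • ∑ y : f.range, g y := by
  classical
  rw [← Fintype.sum_fiberwise f.rangeRestrict, smul_sum]
  refine Fintype.sum_congr _ _ fun y => ?_
  obtain ⟨a, rfl⟩ := f.rangeRestrict_surjective y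
  have hfiber : ∀ x : {x // f.rangeRestrict x = f.rangeRestrict a}, g (f x) = g (f a) :=
    fun x => congrArg (g ∘ Subtype.val) x.2
  rw [Fintype.sum_congr _ _ hfiber, sum_const, card_univ, Fintype.card_subtype,
    AddMonoidHom.card_fiber_eq_of_mem_range f.rangeRestrict ⟨a, rfl⟩ ⟨0, map_zero _⟩,
    Nat.card_eq_fintype_card, Fintype.card_subtype]
  simp [Subtype.ext_iff]

section QuadraticCharSums

variable {F : Type*} [Field F] [Fintype F] [DecidableEq F]

theorem quadraticChar_one_add_nonneg (a : F) : 0 ≤ 1 + quadraticChar F a := by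
  rcases quadraticChar_isQuadratic F a with h | h | h <;> simp [h]

theorem sum_quadraticChar_add (hF : ringChar F ≠ 2) (a : F) :
    ∑ x, quadraticChar F (x + a) = 0 :=
  (Fintype.sum_equiv (Equiv.addRight a) _ _ fun _ => rfl).trans (quadraticChar_sum_zero hF)

theorem sum_quadraticChar_mul_self :
    ∑ x, quadraticChar F (x * x) = (Fintype.card F : ℤ) - 1 := by
  simp_rw [map_mul, ← sq, ← MulChar.pow_apply' _ two_ne_zero,
    (quadraticChar_isQuadratic F).sq_eq_one, MulChar.sum_one_eq_card_units, Fintype.card_units,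
    Nat.cast_sub Fintype.card_pos, Nat.cast_one]

theorem sum_quadraticChar_mul_one_sub (hF : ringChar F ≠ 2) :
    ∑ x, quadraticChar F (x * (1 - x)) = -quadraticChar F (-1) := by
  simp_rw [map_mul, ← jacobiSum_nontrivial_inv (quadraticChar_ne_one hF),
    (quadraticChar_isQuadratic F).inv, jacobiSum]

theorem sum_quadraticChar_add_mul_add_of_ne (hF : ringChar F ≠ 2) {a b : F} (hab : a ≠ b) :
    ∑ x, quadraticChar F ((x + a) * (x + b)) = -1 := by
  have hd : a - b ≠ 0 := sub_ne_zero.mpr hab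
  -- substituting `x = (a - b) y - a` turns the sum into `χ (-1)` times a Jacobi sum
  have he : ∀ y, quadraticChar F (((a - b) * y - a + a) * ((a - b) * y - a + b)) =
      quadraticChar F (-1) * quadraticChar F (y * (1 - y)) := fun y => by
    rw [show ((a - b) * y - a + a) * ((a - b) * y - a + b) = -1 * (a - b) ^ 2 * (y * (1 - y)) by
      ring, map_mul, map_mul, quadraticChar_sq_one' hd, mul_one]
  rw [← Fintype.sum_bijective (fun y => (a - b) * y - a)
      ((Equiv.subRight a).bijective.comp (mulLeft_bijective₀ _ hd)) _ _ fun _ => rfl,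
    Fintype.sum_congr _ _ he, ← mul_sum, sum_quadraticChar_mul_one_sub hF,
    mul_neg, ← sq, quadraticChar_sq_one (neg_ne_zero.mpr one_ne_zero)]

theorem sum_quadraticChar_add_mul_add (hF : ringChar F ≠ 2) (a b : F) :
    ∑ x, quadraticChar F ((x + a) * (x + b)) = if a = b then (Fintype.card F : ℤ) - 1 else -1 := by
  split_ifs with hab
  · rw [hab, ← sum_quadraticChar_mul_self]
    exact Fintype.sum_equiv (Equiv.addRight b) _ _ fun _ => rfl
  · exact sum_quadraticChar_add_mul_add_of_ne hF hab

theorem sum_sq_sum_quadraticChar_add (hF : ringChar F ≠ 2) {ι : Type*} [Fintype ι]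
    {a : ι → F} (ha : Function.Injective a) :
    ∑ c, (∑ i, quadraticChar F (a i + c)) ^ 2 =
      Fintype.card ι * ((Fintype.card F : ℤ) - Fintype.card ι) := by
  classical
  calc ∑ c, (∑ i, quadraticChar F (a i + c)) ^ 2
      = ∑ i, ∑ j, ∑ c, quadraticChar F ((c + a i) * (c + a j)) := by
        simp_rw [sq, sum_mul_sum, map_mul, add_comm]
        rw [sum_comm]; exact sum_congr rfl fun _ _ => sum_comm
    _ = ∑ i, ∑ j, ((if i = j then (Fintype.card F : ℤ) else 0) - 1) := by
        simp_rw [sum_quadraticChar_add_mul_add hF, ha.eq_iff]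
        refine sum_congr rfl fun i _ => sum_congr rfl fun j _ => ?_
        split_ifs <;> ring
    _ = _ := by simp [sum_sub_distrib, mul_sub]

end QuadraticCharSums

section IndexThree

variable {F : Type*} [Field F] [Fintype F] [DecidableEq F] (H : AddSubgroup F) [Fintype H]

def quadraticCharCosetSum (c : F) : ℤ := ∑ t : H, quadraticChar F (t + c)

variable {H}

theorem quadraticCharCosetSum_add_of_mem {t : F} (ht : t ∈ H) (c : F) :
    quadraticCharCosetSum H (t + c) = quadraticCharCosetSum H c :=
  Fintype.sum_equiv (Equiv.addRight ⟨t, ht⟩) _ _ fun s => by simp [add_assoc]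

theorem quadraticCharCosetSum_neg (c : F) :
    quadraticCharCosetSum H (-c) = quadraticChar F (-1) * quadraticCharCosetSum H c := by
  rw [quadraticCharCosetSum, quadraticCharCosetSum, mul_sum]
  refine Fintype.sum_equiv (Equiv.neg H) _ _ fun s => ?_
  rw [← map_mul, Equiv.neg_apply, AddSubgroup.coe_neg]
  ring_nf

theorem sum_quadraticCharCosetSum_sq (hF : ringChar F ≠ 2) :
    ∑ c, quadraticCharCosetSum H c ^ 2 =
      Fintype.card H * ((Fintype.card F : ℤ) - Fintype.card H) :=
  sum_sq_sum_quadraticChar_add hF Subtype.val_injective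

theorem sq_quadraticCharCosetSum_zero_le (hF : ringChar F ≠ 2) (hH : H.index = 3) :
    9 * quadraticCharCosetSum H 0 ^ 2 ≤ 4 * Fintype.card F := by
  have hcard : (Fintype.card F : ℤ) = 3 * Fintype.card H := by
    simp_rw [← Nat.card_eq_fintype_card, ← H.index_mul_card, hH, Nat.cast_mul, Nat.cast_ofNat]
  obtain ⟨c, hc⟩ : ∃ c, c ∉ H := by
    by_contra! h
    simp [(AddSubgroup.eq_top_iff' H).mpr h] at hH
  set S₀ := quadraticCharCosetSum H 0
  set S₁ := quadraticCharCosetSum H c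
  set S₂ := quadraticCharCosetSum H (-c)
  have hsum : S₀ + S₁ + S₂ = 0 := by
    have := H.sum_eq_sum_add_add_of_index_eq_three hH hc (quadraticChar F)
    rw [quadraticChar_sum_zero hF] at this
    simpa [sum_add_distrib, sub_eq_add_neg, S₀, S₁, S₂,
      quadraticCharCosetSum] using this.symm
  have hsq : S₀ ^ 2 + S₁ ^ 2 + S₂ ^ 2 = 2 * Fintype.card H := by
    have hconst : ∀ t : H, quadraticCharCosetSum H t ^ 2 + quadraticCharCosetSum H (t + c) ^ 2
        + quadraticCharCosetSum H (t - c) ^ 2 = S₀ ^ 2 + S₁ ^ 2 + S₂ ^ 2 := fun t => by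
      have h0 : quadraticCharCosetSum H t = S₀ := by
        simpa using quadraticCharCosetSum_add_of_mem t.2 0
      rw [sub_eq_add_neg, quadraticCharCosetSum_add_of_mem t.2,
        quadraticCharCosetSum_add_of_mem t.2, h0]
    have := H.sum_eq_sum_add_add_of_index_eq_three hH hc (quadraticCharCosetSum H · ^ 2)
    rw [Fintype.sum_congr _ _ hconst, sum_const, card_univ, nsmul_eq_mul,
      sum_quadraticCharCosetSum_sq hF, hcard] at this
    have hpos : (Fintype.card H : ℤ) ≠ 0 := by positivity
    exact (mul_left_cancel₀ hpos this).symm.trans (by ring)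
  rcases quadraticChar_isQuadratic F (-1) with h | h | h
  · exact absurd h (quadraticChar_eq_zero_iff.not.mpr (neg_ne_zero.mpr one_ne_zero))
  · have : S₂ = S₁ := by simp only [S₁, S₂, quadraticCharCosetSum_neg, h, one_mul]
    have h0 : S₀ = -2 * S₁ := by linarith
    rw [this, h0] at hsq
    rw [hcard, h0]
    nlinarith
  · have : S₀ = -S₀ := by simpa [h] using quadraticCharCosetSum_neg (H := H) 0
    rw [show S₀ = 0 by linarith]
    positivity

end IndexThree

section ArtinSchreier

def artinSchreier (R : Type*) [CommRing R] (p : ℕ) [ExpChar R p] : R →+ R :=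
  (frobenius R p).toAddMonoidHom - AddMonoidHom.id R

@[simp]
theorem artinSchreier_apply {R : Type*} [CommRing R] {p : ℕ} [ExpChar R p] (x : R) :
    artinSchreier R p x = x ^ p - x :=
  rfl

theorem ringChar_ne_two_of_charP_three (R : Type*) [NonAssocRing R] [CharP R 3] :
    ringChar R ≠ 2 := by
  rw [ringChar.eq R 3]
  norm_num

variable {F : Type*} [Field F] [CharP F 3]

theorem card_ker_artinSchreier : Nat.card (artinSchreier F 3).ker = 3 := by
  have hker : ((artinSchreier F 3).ker : Set F) = {0, 1, -1} := by
    ext x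
    simp only [SetLike.mem_coe, AddMonoidHom.mem_ker, artinSchreier_apply, Set.mem_insert_iff,
      Set.mem_singleton_iff]
    rw [show x ^ 3 - x = x * (x - 1) * (x + 1) by ring, mul_eq_zero, mul_eq_zero, sub_eq_zero,
      add_eq_zero_iff_eq_neg, or_assoc]
  rw [← SetLike.coe_sort_coe, hker, Nat.card_coe_set_eq, Set.ncard_eq_three]
  exact ⟨0, 1, -1, zero_ne_one, (neg_ne_zero.mpr one_ne_zero).symm,
    (Ring.neg_one_ne_one_of_char_ne_two (ringChar_ne_two_of_charP_three F)).symm, rfl⟩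

theorem index_range_artinSchreier [Finite F] : (artinSchreier F 3).range.index = 3 := by
  have h := (artinSchreier F 3).ker.card_mul_index
  rw [AddSubgroup.index_ker, card_ker_artinSchreier,
    ← (artinSchreier F 3).range.index_mul_card] at h
  exact (Nat.eq_of_mul_eq_mul_right Nat.card_pos h).symm

end ArtinSchreier

section ThreeSquares

variable {F : Type*} [Field F] [Fintype F] [DecidableEq F]

theorem sq_sum_quadraticChar_cube_sub_self_le [CharP F 3] :
    (∑ x : F, quadraticChar F (x ^ 3 - x)) ^ 2 ≤ 4 * Fintype.card F := by
  have hF := ringChar_ne_two_of_charP_three F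
  have hT : ∑ x : F, quadraticChar F (x ^ 3 - x) =
      3 * quadraticCharCosetSum (artinSchreier F 3).range 0 := by
    have := (artinSchreier F 3).sum_comp_eq_card_ker_nsmul (quadraticChar F)
    rw [card_ker_artinSchreier] at this
    simpa [quadraticCharCosetSum] using this
  rw [hT]
  linarith [sq_quadraticCharCosetSum_zero_le hF index_range_artinSchreier]

theorem sum_one_add_quadraticChar_shifts (hF : ringChar F ≠ 2) :
    ∑ x : F, (1 + quadraticChar F x) * (1 + quadraticChar F (x + 1)) *
        (1 + quadraticChar F (x - 1)) =
      Fintype.card F - 3 + ∑ x : F, quadraticChar F (x ^ 3 - x) := by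
  have hexpand : ∀ x : F, (1 + quadraticChar F x) * (1 + quadraticChar F (x + 1)) *
      (1 + quadraticChar F (x - 1)) = 1 + quadraticChar F (x + 0) + quadraticChar F (x + 1)
        + quadraticChar F (x + -1) + quadraticChar F ((x + 0) * (x + 1))
        + quadraticChar F ((x + 0) * (x + -1)) + quadraticChar F ((x + 1) * (x + -1))
        + quadraticChar F (x ^ 3 - x) := fun x => by
    rw [show x ^ 3 - x = x * (x + 1) * (x - 1) by ring]
    simp only [map_mul, add_zero, ← sub_eq_add_neg]
    ring
  have h1 : (1 : F) ≠ -1 := (Ring.neg_one_ne_one_of_char_ne_two hF).symm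
  simp only [hexpand, sum_add_distrib, sum_const, card_univ, sum_quadraticChar_add hF,
    sum_quadraticChar_add_mul_add_of_ne hF zero_ne_one,
    sum_quadraticChar_add_mul_add_of_ne hF (neg_ne_zero.mpr one_ne_zero).symm,
    sum_quadraticChar_add_mul_add_of_ne hF h1, nsmul_eq_mul, mul_one]
  ring

theorem eight_mul_card_three_squares_le (hF : ringChar F ≠ 2) :
    8 * (Nat.card {x : F // x ≠ 0 ∧ IsSquare x ∧ x + 1 ≠ 0 ∧ IsSquare (x + 1) ∧
        x - 1 ≠ 0 ∧ IsSquare (x - 1)} : ℤ)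
      ≤ Fintype.card F - 3 + ∑ x : F, quadraticChar F (x ^ 3 - x) := by
  classical
  rw [← sum_one_add_quadraticChar_shifts hF, Nat.card_eq_fintype_card, Fintype.card_subtype,
    mul_comm, ← nsmul_eq_mul, ← sum_const]
  refine (sum_le_sum fun x hx => ?_).trans (sum_le_sum_of_subset_of_nonneg (subset_univ _)
    fun x _ _ => ?_)
  · obtain ⟨h0, hs0, h1, hs1, h2, hs2⟩ := (mem_filter.mp hx).2
    rw [(quadraticChar_one_iff_isSquare h0).mpr hs0, (quadraticChar_one_iff_isSquare h1).mpr hs1,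
      (quadraticChar_one_iff_isSquare h2).mpr hs2]
    norm_num
  · have := quadraticChar_one_add_nonneg (F := F)
    exact mul_nonneg (mul_nonneg (this x) (this _)) (this _)

end ThreeSquares

theorem card_three_squares_le_general (m q : ℕ) (hq : q = 3 ^ m)
    (F : Type*) [Field F] [Fintype F] (hF : Fintype.card F = q) :
    (Nat.card {x : F // x ≠ 0 ∧ IsSquare x ∧ x + 1 ≠ 0 ∧ IsSquare (x + 1) ∧
        x - 1 ≠ 0 ∧ IsSquare (x - 1)} : ℝ)
      ≤ (q + 2 * Real.sqrt q + 9) / 8 := by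
  classical
  have : CharP F 3 := charP_of_card_eq_prime_pow (hF.trans hq)
  set T : ℤ := ∑ x : F, quadraticChar F (x ^ 3 - x)
  have hcount : 8 * (Nat.card {x : F // x ≠ 0 ∧ IsSquare x ∧ x + 1 ≠ 0 ∧ IsSquare (x + 1) ∧
      x - 1 ≠ 0 ∧ IsSquare (x - 1)} : ℝ) ≤ q - 3 + T := by
    rw [← hF]
    exact_mod_cast eight_mul_card_three_squares_le (ringChar_ne_two_of_charP_three F)
  have hT : (T : ℝ) ≤ 2 * Real.sqrt q := by
    have hsq : (T : ℝ) ^ 2 ≤ 4 * q := by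
      rw [← hF]
      exact_mod_cast sq_sum_quadraticChar_cube_sub_self_le (F := F)
    nlinarith [Real.sq_sqrt (Nat.cast_nonneg (α := ℝ) q), Real.sqrt_nonneg q]
  linarith

/-- For q = 3^m, the number of x ∈ F_q^* with x, x+1, x-1 all nonzero squares
is at most (q + 2√q + 9)/8. -/
theorem card_three_squares_le (m q : ℕ) (hm : 0 < m) (hq : q = 3 ^ m)
    (F : Type*) [Field F] [Fintype F] (hF : Fintype.card F = q) :
    (Nat.card {x : F // x ≠ 0 ∧ IsSquare x ∧ x + 1 ≠ 0 ∧ IsSquare (x + 1) ∧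
        x - 1 ≠ 0 ∧ IsSquare (x - 1)} : ℝ)
      ≤ (q + 2 * Real.sqrt q + 9) / 8 :=
  card_three_squares_le_general m q hq F hF
end

section
/- Let q = 3^m. For any i ∈ F_3, the number of x ∈ F_q with Tr_{F_q/F_3}(x) = i and Tr_{F_q/F_3}(x^2) = 0 is at least (q - 6√q)/9. -/
/-!
Detecting the conditions `Tr x = i`, `Tr x² = j` with a primitive additive character `e` of `K`
turns `|K|² N` into `∑_{a,b ∈ K} e(-(a i + b j)) ∑_{x ∈ F} ψ(a x + b x²)` with `ψ = e ∘ Tr`.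
The term `(0, 0)` is `|F|`, the terms with `b = 0 ≠ a` vanish by orthogonality, and each of the
remaining `|K|² - |K|` terms has absolute value `√|F|` by Weyl differencing:
`|∑ₓ ψ(c x + d x²)|² = ∑ₕ ψ(c h + d h²) ∑_y ψ(2 d h y) = |F|`.
-/

open Finset AddChar

section QuadraticSum

variable {F : Type*} [Field F] [Fintype F] {ψ : AddChar F ℂ}

theorem AddChar.IsPrimitive.norm_sq_sum_quadratic (hψ : ψ.IsPrimitive) (h2 : (2 : F) ≠ 0)
    (c : F) {d : F} (hd : d ≠ 0) : ‖∑ x, ψ (c * x + d * x ^ 2)‖ ^ 2 = Fintype.card F := by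
  classical
  set f : F → F := fun x ↦ c * x + d * x ^ 2
  have hdiff (y h : F) : f (y + h) - f y = f h + y * (2 * d * h) := by simp only [f]; ring
  have key : ((‖∑ x, ψ (f x)‖ ^ 2 : ℝ) : ℂ) = Fintype.card F :=
    calc ((‖∑ x, ψ (f x)‖ ^ 2 : ℝ) : ℂ)
        = ∑ y, ∑ x, ψ (f x - f y) := by
          rw [Complex.ofReal_pow, ← Complex.mul_conj', map_sum, sum_mul_sum, sum_comm]
          simp_rw [← map_neg_eq_conj, ← map_add_eq_mul, sub_eq_add_neg]
      _ = ∑ y, ∑ h, ψ (f (y + h) - f y) := by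
          refine sum_congr rfl fun y _ ↦ ?_
          exact (Fintype.sum_equiv (Equiv.addLeft y) _ _ fun _ ↦ rfl).symm
      _ = ∑ h, ψ (f h) * ∑ y, ψ (y * (2 * d * h)) := by
          rw [sum_comm]
          simp_rw [hdiff, map_add_eq_mul, mul_sum]
      _ = Fintype.card F := by
          simp_rw [sum_mulShift _ hψ]
          simp [f, h2, hd]
  exact_mod_cast key

theorem AddChar.IsPrimitive.norm_sum_quadratic (hψ : ψ.IsPrimitive) (h2 : (2 : F) ≠ 0)
    (c : F) {d : F} (hd : d ≠ 0) : ‖∑ x, ψ (c * x + d * x ^ 2)‖ = √(Fintype.card F) := by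
  rw [← hψ.norm_sq_sum_quadratic h2 c hd, Real.sqrt_sq (norm_nonneg _)]

end QuadraticSum

namespace AddChar

variable {K : Type*} (F : Type*) [Field K] [Field F] [Algebra K F]

noncomputable def compTrace {R : Type*} [CommMonoid R] (e : AddChar K R) : AddChar F R :=
  e.compAddMonoidHom (Algebra.trace K F).toAddMonoidHom

@[simp]
theorem compTrace_apply {R : Type*} [CommMonoid R] (e : AddChar K R) (x : F) :
    e.compTrace F x = e (Algebra.trace K F x) := rfl

theorem IsPrimitive.compTrace [Finite F] {R : Type*} [CommMonoid R] {e : AddChar K R}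
    (he : e.IsPrimitive) : (e.compTrace F).IsPrimitive := by
  have : Finite K := .of_injective _ (algebraMap K F).injective
  have : Module.Finite K F := .of_finite
  refine IsPrimitive.of_ne_one fun h ↦ he one_ne_zero ?_
  ext t
  obtain ⟨x, rfl⟩ := Algebra.trace_surjective K F t
  simpa using DFunLike.congr_fun h x

end AddChar

section TraceCount

variable {K : Type*} (F : Type*) [Field K] [Fintype K] [Field F] [Fintype F] [Algebra K F]

theorem card_sq_mul_card_trace_eq_sum {e : AddChar K ℂ} (he : e.IsPrimitive) (i j : K) :
    (Fintype.card K ^ 2 *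
        Nat.card {x : F // Algebra.trace K F x = i ∧ Algebra.trace K F (x ^ 2) = j} : ℂ) =
      ∑ a : K, ∑ b : K, e (-(a * i + b * j)) * ∑ x : F, e.compTrace F (a • x + b • x ^ 2) := by
  classical
  have detect (t : K) : ∑ a, e (a * t) = if t = 0 then (Fintype.card K : ℂ) else 0 := by
    rw [sum_mulShift t he, apply_ite ((↑) : ℕ → ℂ), Nat.cast_zero]
  have factor (x : F) (a b : K) :
      e (a * (Algebra.trace K F x - i)) * e (b * (Algebra.trace K F (x ^ 2) - j)) =
        e (-(a * i + b * j)) * e.compTrace F (a • x + b • x ^ 2) := by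
    rw [compTrace_apply, ← map_add_eq_mul, ← map_add_eq_mul]
    congr 1
    simp only [map_add, map_smul, smul_eq_mul]
    ring
  calc _ = ∑ x : F, (∑ a, e (a * (Algebra.trace K F x - i))) *
          ∑ b, e (b * (Algebra.trace K F (x ^ 2) - j)) := by
        simp_rw [detect, sub_eq_zero, ite_zero_mul_ite_zero, sum_ite, sum_const_zero, add_zero,
          sum_const, nsmul_eq_mul, Nat.card_eq_fintype_card, Fintype.card_subtype]
        ring
    _ = _ := by
        simp_rw [sum_mul_sum, factor, mul_sum]
        rw [sum_comm]
        exact sum_congr rfl fun a _ ↦ sum_comm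

theorem norm_sum_compTrace_sub_card_le (h2 : (2 : K) ≠ 0) {e : AddChar K ℂ} (he : e.IsPrimitive)
    (i j : K) :
    ‖∑ a : K, ∑ b : K, e (-(a * i + b * j)) * ∑ x : F, e.compTrace F (a • x + b • x ^ 2) -
        Fintype.card F‖ ≤ (Fintype.card K ^ 2 - Fintype.card K) * √(Fintype.card F) := by
  classical
  have hψ := he.compTrace F
  have linear (a : K) : ∑ x : F, e.compTrace F (a • x + (0 : K) • x ^ 2) =
      if a = 0 then (Fintype.card F : ℂ) else 0 := by
    simpa [Algebra.smul_def, mul_comm] using sum_mulShift (algebraMap K F a) hψ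
  have quadratic (a : K) {b : K} (hb : b ≠ 0) :
      ‖∑ x : F, e.compTrace F (a • x + b • x ^ 2)‖ = √(Fintype.card F) := by
    simp_rw [Algebra.smul_def]
    have h2F : (2 : F) ≠ 0 := by
      rw [← map_ofNat (algebraMap K F) 2]
      exact (map_ne_zero _).mpr h2
    exact hψ.norm_sum_quadratic h2F _ ((map_ne_zero _).mpr hb)
  rw [sum_comm, Fintype.sum_eq_add_sum_compl 0]
  simp_rw [linear, mul_ite, mul_zero]
  calc _ = ‖∑ b ∈ {0}ᶜ, ∑ a : K, e (-(a * i + b * j)) *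
          ∑ x : F, e.compTrace F (a • x + b • x ^ 2)‖ := by simp
    _ ≤ ∑ b ∈ {(0 : K)}ᶜ, ∑ a : K, √(Fintype.card F) := by
        refine (norm_sum_le _ _).trans (sum_le_sum fun b hb ↦ (norm_sum_le _ _).trans_eq ?_)
        rw [mem_compl, mem_singleton] at hb
        simp_rw [norm_mul, norm_apply, one_mul, quadratic _ hb]
    _ = _ := by
        simp only [sum_const, card_univ, nsmul_eq_mul, card_compl, card_singleton,
          Nat.cast_sub Fintype.card_pos, Nat.cast_one]
        ring

theorem abs_card_sq_mul_card_trace_sub_card_le (h2 : (2 : K) ≠ 0) (i j : K) :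
    |(Fintype.card K ^ 2 *
        Nat.card {x : F // Algebra.trace K F x = i ∧ Algebra.trace K F (x ^ 2) = j} : ℝ) -
        Fintype.card F| ≤ (Fintype.card K ^ 2 - Fintype.card K) * √(Fintype.card F) := by
  obtain ⟨e, he⟩ : ∃ e : AddChar K ℂ, e.IsPrimitive := by
    obtain ⟨e, he⟩ := exists_apply_ne_zero.mpr (one_ne_zero (α := K))
    exact ⟨e, .of_ne_one fun h ↦ he (by simp [h])⟩
  rw [← Real.norm_eq_abs, ← Complex.norm_real]
  push_cast
  rw [card_sq_mul_card_trace_eq_sum F he]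
  exact norm_sum_compTrace_sub_card_le F h2 he i j

end TraceCount

theorem card_trace_conditions_ge_general (q : ℕ)
    (F : Type*) [Field F] [Fintype F] [Algebra (ZMod 3) F]
    (hF : Fintype.card F = q) (i : ZMod 3) :
    ((q : ℝ) - 6 * Real.sqrt q) / 9
      ≤ (Nat.card {x : F // Algebra.trace (ZMod 3) F x = i ∧
          Algebra.trace (ZMod 3) F (x ^ 2) = 0} : ℝ) := by
  have h := abs_card_sq_mul_card_trace_sub_card_le F (by decide : (2 : ZMod 3) ≠ 0) i 0
  rw [ZMod.card, hF] at h
  simp only [Nat.cast_ofNat] at h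
  linarith [(abs_le.mp h).1]

/-- For q = 3^m and any i ∈ F_3, the number of x ∈ F_q with Tr(x) = i and
Tr(x^2) = 0 is at least (q - 6√q)/9. -/
theorem card_trace_conditions_ge (m q : ℕ) (hm : 0 < m) (hq : q = 3 ^ m)
    (F : Type*) [Field F] [Fintype F] [Algebra (ZMod 3) F]
    (hF : Fintype.card F = q) (i : ZMod 3) :
    ((q : ℝ) - 6 * Real.sqrt q) / 9
      ≤ (Nat.card {x : F // Algebra.trace (ZMod 3) F x = i ∧
          Algebra.trace (ZMod 3) F (x ^ 2) = 0} : ℝ) :=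
  card_trace_conditions_ge_general q F hF i
end

section
/- Let q be an odd prime power, f(x) = x^{q+2} on F_{q^2}, and for b ∈ F_{q^2} let δ(b) be the number of u ∈ F_{q^2} with 2u^{q+1} + u^2 = b. Then for every b ∈ F_{q^2}^*, δ(b) is even and δ(b) ≤ 4. -/
open Polynomial in
/-- For every b ∈ F_{q²}^*, δ(b) = #{u : 2u^{q+1} + u² = b} is even and ≤ 4. -/
theorem delta_even_le_four (p m q : ℕ) (hp : p.Prime) (hodd : Odd p)
    (hm : 0 < m) (hq : q = p ^ m)
    (K : Type*) [Field K] [Fintype K] (hK : Fintype.card K = q ^ 2)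
    (b : K) (hb : b ≠ 0) :
    Even (Nat.card {u : K // 2 * u ^ (q + 1) + u ^ 2 = b}) ∧
    Nat.card {u : K // 2 * u ^ (q + 1) + u ^ 2 = b} ≤ 4 := by
  classical
  haveI : Fact p.Prime := ⟨hp⟩
  -- characteristic of K is p
  have hcard : Fintype.card K = p ^ (2 * m) := by
    rw [hK, hq, ← pow_mul, mul_comm]
  have hrdvd : ringChar K ∣ p ^ (2 * m) := by
    rw [← hcard]
    exact (CharP.cast_eq_zero_iff K (ringChar K) _).mp (FiniteField.cast_card_eq_zero K)
  have hrprime : (ringChar K).Prime := CharP.char_is_prime K (ringChar K)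
  have hring : ringChar K = p :=
    (Nat.prime_dvd_prime_iff_eq hrprime hp).mp (hrprime.dvd_of_dvd_pow hrdvd)
  haveI hcharp : CharP K p := hring ▸ ringChar.charP K
  have h2 : (2 : K) ≠ 0 := by
    intro h
    have h2' : ((2 : ℕ) : K) = 0 := by exact_mod_cast h
    have hpd : p ∣ 2 := (CharP.cast_eq_zero_iff K p 2).mp h2'
    have hp2 : p = 2 := (Nat.prime_dvd_prime_iff_eq hp Nat.prime_two).mp hpd
    rw [hp2] at hodd
    rcases hodd with ⟨k, hk⟩
    omega
  have hqodd : Odd q := hq ▸ hodd.pow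
  have hqev : Even (q + 1) := Nat.even_add_one.mpr (Nat.not_even_iff_odd.mpr hqodd)
  haveI : Fintype {u : K // 2 * u ^ (q + 1) + u ^ 2 = b} := Subtype.fintype _
  constructor
  · -- evenness via the fixed-point-free involution u ↦ -u
    rw [Nat.card_eq_fintype_card]
    let f : Function.End {u : K // 2 * u ^ (q + 1) + u ^ 2 = b} := fun u =>
      ⟨-u.1, by rw [hqev.neg_pow, neg_sq]; exact u.2⟩
    have hff : ∀ u, f (f u) = u := fun u => Subtype.ext (neg_neg u.1)
    have hf : f ^ 2 ^ 1 = 1 := by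
      have : f * f = 1 := funext hff
      rw [pow_one, pow_two]
      exact this
    have hzero : Fintype.card (Function.fixedPoints f) = 0 := by
      rw [Fintype.card_eq_zero_iff]
      refine ⟨fun w => ?_⟩
      obtain ⟨u, hu⟩ := w
      have h1 : -u.1 = u.1 := congrArg Subtype.val hu
      have h0 : u.1 = 0 := by
        have : 2 * u.1 = 0 := by linear_combination -h1
        rcases mul_eq_zero.mp this with h | h
        · exact absurd h h2
        · exact h
      have := u.2
      rw [h0] at this
      simp at this
      exact hb this.symm
    have hmod := Equiv.Perm.card_fixedPoints_modEq (p := 2) (n := 1) hf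
    rw [hzero] at hmod
    exact Nat.even_iff.mpr (by simpa [Nat.ModEq] using hmod)
  · -- every solution is a root of a nonzero quartic
    haveI : ExpChar K p := ExpChar.prime hp
    set P : K[X] := C 3 * X ^ 4 + C (4 * b ^ q - 2 * b) * X ^ 2 - C (b ^ 2) with hP
    have hP0 : P ≠ 0 := by
      intro h
      have h0 : P.coeff 0 = -(b ^ 2) := by
        simp only [hP, coeff_sub, coeff_add, coeff_C_mul, coeff_X_pow, coeff_C]
        norm_num
      rw [h, coeff_zero] at h0
      exact hb ((pow_eq_zero_iff (by norm_num : (2:ℕ) ≠ 0)).mp (neg_eq_zero.mp h0.symm))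
    have hdeg : P.natDegree ≤ 4 := by rw [hP]; compute_degree
    have hroot : ∀ u : K, 2 * u ^ (q + 1) + u ^ 2 = b → P.eval u = 0 := by
      intro u hu
      have hFu : u ^ (q ^ 2) = u := by rw [← hK]; exact FiniteField.pow_card u
      have hbq : b ^ q = 2 * (u * u ^ q) + (u ^ q) ^ 2 := by
        have := congrArg (iterateFrobenius K p m) hu
        simp only [map_add, map_mul, map_pow, map_ofNat, iterateFrobenius_def, ← hq] at this
        rw [← this, ← pow_mul]
        have hqq : q * (q + 1) = q ^ 2 + q := by ring
        rw [hqq, pow_add, hFu]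
      have hu' : 2 * (u ^ q * u) + u ^ 2 = b := by
        rw [← hu]; ring
      rw [hP]
      simp only [eval_add, eval_sub, eval_mul, eval_pow, eval_C, eval_X]
      rw [hbq, ← hu']
      ring
    have hsub : {u : K | 2 * u ^ (q + 1) + u ^ 2 = b} ⊆ (P.roots.toFinset : Set K) := by
      intro u hu
      simp only [Finset.coe_sort_coe, Finset.mem_coe, Multiset.mem_toFinset, mem_roots']
      exact ⟨hP0, hroot u hu⟩
    calc Nat.card {u : K // 2 * u ^ (q + 1) + u ^ 2 = b}
        = Set.ncard {u : K | 2 * u ^ (q + 1) + u ^ 2 = b} :=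
          (Nat.card_coe_set_eq _)
      _ ≤ Set.ncard (P.roots.toFinset : Set K) := Set.ncard_le_ncard hsub (Set.toFinite _)
      _ = P.roots.toFinset.card := Set.ncard_coe_finset _
      _ ≤ Multiset.card P.roots := Multiset.toFinset_card_le _
      _ ≤ P.natDegree := P.card_roots'
      _ ≤ 4 := hdeg
end

section
/- Let q = 3^m. For every b ∈ F_{q^2}^*, the number of u ∈ F_{q^2} with 2u^{q+1} + u^2 = b equals 2 if Tr_{F_{q^2}/F_q}(b) is a nonsquare in F_q, and equals 0 if Tr_{F_{q^2}/F_q}(b) is a square in F_q (including zero trace). -/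
/-!
In characteristic 3 the equation reads `u * (u - u ^ q) = b`. The element `w = u - u ^ q` satisfies
`w ^ q = -w` and `w ^ 2 = Tr b`, so `Tr b` has a square root in `F_{q²}` outside `F_q`, i.e. it is a
nonsquare of `F_q` (Euler's criterion). Conversely, when `Tr b` is a nonsquare its two square roots
`±s` satisfy `s ^ q = -s`, and the solutions are exactly `u = b / (±s)`.
-/

theorem self_ne_neg_of_ringChar_ne_two {R : Type*} [Ring R] [NoZeroDivisors R] [Nontrivial R]
    (hR : ringChar R ≠ 2) {w : R} (hw : w ≠ 0) : w ≠ -w := fun h ↦ by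
  rw [eq_neg_iff_add_eq_zero, ← two_mul] at h
  exact hw ((mul_eq_zero.mp h).resolve_left (Ring.two_ne_zero hR))

namespace FiniteField

variable {F K : Type*} [Field F] [Fintype F] [Field K] [Algebra F K]

theorem pow_card_eq_neg_iff_not_isSquare (hF : ringChar F ≠ 2) {t : F} {w : K} (hw : w ≠ 0)
    (hwt : w ^ 2 = algebraMap F K t) : w ^ Fintype.card F = -w ↔ ¬IsSquare t := by
  have ht : t ≠ 0 := by rintro rfl; simp_all
  have hK : ringChar K ≠ 2 := by rwa [← Algebra.ringChar_eq F K]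
  have hcard : 2 * (Fintype.card F / 2) = Fintype.card F - 1 := by
    have := odd_card_of_char_ne_two hF; omega
  have hpow : w ^ Fintype.card F = w ^ (Fintype.card F - 1) * w := by
    rw [← pow_succ, Nat.sub_add_cancel Fintype.card_pos]
  have hfix : IsSquare t ↔ w ^ Fintype.card F = w := by
    rw [isSquare_iff hF ht, hpow, mul_eq_right₀ hw, ← hcard, pow_mul, hwt, ← map_pow,
      (algebraMap F K).injective.eq_iff' (map_one _)]
  have hsq : w ^ Fintype.card F = w ∨ w ^ Fintype.card F = -w := by
    rw [← sq_eq_sq_iff_eq_or_eq_neg, ← pow_mul, mul_comm, pow_mul, hwt, ← map_pow, pow_card]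
  rw [hfix]
  exact ⟨fun h h' ↦ self_ne_neg_of_ringChar_ne_two hK hw (h'.symm.trans h), hsq.resolve_left⟩

variable [Fintype K]

theorem finrank_eq_two_of_card_eq_sq (hK : Fintype.card K = Fintype.card F ^ 2) :
    Module.finrank F K = 2 :=
  Nat.pow_right_injective (Fintype.one_lt_card (α := F))
    (Module.card_eq_pow_finrank.symm.trans hK)

theorem algebraMap_trace_eq_add_pow_card (hK : Fintype.card K = Fintype.card F ^ 2) (x : K) :
    algebraMap F K (Algebra.trace F K x) = x + x ^ Fintype.card F := by
  simp [algebraMap_trace_eq_sum_pow, finrank_eq_two_of_card_eq_sq hK, Finset.sum_range_succ]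

theorem isSquare_algebraMap_of_card_eq_sq (hK : Fintype.card K = Fintype.card F ^ 2) (c : F) :
    IsSquare (algebraMap F K c) := by
  by_cases hF : ringChar F = 2
  · exact isSquare_of_char_two (by rwa [← Algebra.ringChar_eq F K]) _
  rcases eq_or_ne c 0 with rfl | hc
  · simp
  obtain ⟨k, hk⟩ : Odd (Fintype.card F) := Nat.odd_iff.mpr (odd_card_of_char_ne_two hF)
  have hexp : Fintype.card K / 2 = (Fintype.card F - 1) * (k + 1) := by
    rw [hK, hk, Nat.add_sub_cancel, show (2 * k + 1) ^ 2 = 2 * (2 * k * (k + 1)) + 1 by ring]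
    omega
  rw [isSquare_iff (by rwa [← Algebra.ringChar_eq F K]) (by simpa using hc), hexp, pow_mul,
    ← map_pow, pow_card_sub_one_eq_one c hc, map_one, one_pow]

theorem sub_pow_card_pow_card (hK : Fintype.card K = Fintype.card F ^ 2) (u : K) :
    (u - u ^ Fintype.card F) ^ Fintype.card F = -(u - u ^ Fintype.card F) := by
  have hσ := map_sub (frobeniusAlgEquivOfAlgebraic F K) u (u ^ Fintype.card F)
  simp only [frobeniusAlgEquivOfAlgebraic_apply] at hσ
  rw [hσ, ← pow_mul, ← sq, ← hK, pow_card, neg_sub]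

theorem sq_sub_pow_card_eq_algebraMap_trace (hK : Fintype.card K = Fintype.card F ^ 2)
    {u b : K} (h : u * (u - u ^ Fintype.card F) = b) :
    (u - u ^ Fintype.card F) ^ 2 = algebraMap F K (Algebra.trace F K b) := by
  rw [algebraMap_trace_eq_add_pow_card hK, ← h, mul_pow, sub_pow_card_pow_card hK]
  ring

theorem div_mul_sub_pow_card_eq (hK : Fintype.card K = Fintype.card F ^ 2) {b s : K}
    (hs : s ≠ 0) (hst : s ^ 2 = algebraMap F K (Algebra.trace F K b))
    (hsσ : s ^ Fintype.card F = -s) :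
    b / s * (b / s - (b / s) ^ Fintype.card F) = b := by
  rw [algebraMap_trace_eq_add_pow_card hK] at hst
  have hw : b / s - (b / s) ^ Fintype.card F = s := by
    rw [div_pow, hsσ, div_neg, sub_neg_eq_add, ← add_div, ← hst, sq, mul_div_cancel_right₀ _ hs]
  rw [hw, div_mul_cancel₀ _ hs]

theorem not_isSquare_trace_of_mul_sub_pow_card_eq (hK : Fintype.card K = Fintype.card F ^ 2)
    (hF : ringChar F ≠ 2) {u b : K} (hb : b ≠ 0) (h : u * (u - u ^ Fintype.card F) = b) :
    ¬IsSquare (Algebra.trace F K b) := by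
  have hw : u - u ^ Fintype.card F ≠ 0 := by rintro h0; rw [h0, mul_zero] at h; exact hb h.symm
  exact (pow_card_eq_neg_iff_not_isSquare hF hw (sq_sub_pow_card_eq_algebraMap_trace hK h)).mp
    (sub_pow_card_pow_card hK u)

theorem setOf_mul_sub_pow_card_eq (hK : Fintype.card K = Fintype.card F ^ 2) {b s : K}
    (hs : s ≠ 0) (hst : s ^ 2 = algebraMap F K (Algebra.trace F K b))
    (hsσ : s ^ Fintype.card F = -s) :
    {u : K | u * (u - u ^ Fintype.card F) = b} = {b / s, b / -s} := by
  ext u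
  simp only [Set.mem_ofPred_eq, Set.mem_insert_iff, Set.mem_singleton_iff]
  constructor
  · intro h
    have hw := sq_sub_pow_card_eq_algebraMap_trace hK h
    rw [← hst, sq_eq_sq_iff_eq_or_eq_neg] at hw
    rcases hw with hw | hw <;> rw [hw] at h
    · exact Or.inl (eq_div_of_mul_eq hs h)
    · exact Or.inr (eq_div_of_mul_eq (neg_ne_zero.mpr hs) h)
  · have hnegσ : (-s) ^ Fintype.card F = -(-s) := by
      simpa [hsσ] using map_neg (frobeniusAlgEquivOfAlgebraic F K) s
    rintro (rfl | rfl)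
    · exact div_mul_sub_pow_card_eq hK hs hst hsσ
    · exact div_mul_sub_pow_card_eq hK (neg_ne_zero.mpr hs) (by rwa [neg_sq]) hnegσ

theorem ncard_setOf_mul_sub_pow_card_eq_two (hK : Fintype.card K = Fintype.card F ^ 2)
    (hF : ringChar F ≠ 2) {b : K} (hb : b ≠ 0) (ht : ¬IsSquare (Algebra.trace F K b)) :
    {u : K | u * (u - u ^ Fintype.card F) = b}.ncard = 2 := by
  obtain ⟨s, hs⟩ := isSquare_algebraMap_of_card_eq_sq hK (Algebra.trace F K b)
  have hst : s ^ 2 = algebraMap F K (Algebra.trace F K b) := by rw [sq, hs]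
  have hs0 : s ≠ 0 := by
    rintro rfl
    have : Algebra.trace F K b = 0 := by simpa using hs
    exact ht (this ▸ IsSquare.zero)
  have hsσ := (pow_card_eq_neg_iff_not_isSquare hF hs0 hst).mpr ht
  have hK2 : ringChar K ≠ 2 := by rwa [← Algebra.ringChar_eq F K]
  rw [setOf_mul_sub_pow_card_eq hK hs0 hst hsσ, div_neg,
    Set.ncard_pair (self_ne_neg_of_ringChar_ne_two hK2 (div_ne_zero hb hs0))]

end FiniteField

open FiniteField in
theorem delta_char_three_general (m q : ℕ) (hq : q = 3 ^ m)
    (F K : Type*) [Field F] [Field K] [Algebra F K] [Fintype F] [Fintype K]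
    (hF : Fintype.card F = q) (hK : Fintype.card K = q ^ 2)
    (b : K) (hb : b ≠ 0) :
    (¬ IsSquare (Algebra.trace F K b) →
      Nat.card {u : K // 2 * u ^ (q + 1) + u ^ 2 = b} = 2) ∧
    (IsSquare (Algebra.trace F K b) →
      Nat.card {u : K // 2 * u ^ (q + 1) + u ^ 2 = b} = 0) := by
  subst hF
  have h3F : (3 : F) = 0 := by
    have := cast_card_eq_zero F
    rw [hq, Nat.cast_pow, Nat.cast_ofNat] at this
    exact (pow_eq_zero_iff'.mp this).1
  have hchar : ringChar F ≠ 2 := by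
    have : CharP F 3 := (CharP.charP_iff_prime_eq_zero Nat.prime_three).mpr h3F
    rw [ringChar.eq F 3]; decide
  have h3K : (3 : K) = 0 := by rw [← map_ofNat (algebraMap F K), h3F, map_zero]
  have heq (u : K) : 2 * u ^ (Fintype.card F + 1) + u ^ 2 = u * (u - u ^ Fintype.card F) := by
    linear_combination u ^ (Fintype.card F + 1) * h3K
  simp only [heq]
  refine ⟨fun ht ↦ ?_, fun ht ↦ ?_⟩
  · rw [← ncard_setOf_mul_sub_pow_card_eq_two hK hchar hb ht, ← Nat.card_coe_set_eq]
    rfl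
  · exact Nat.card_eq_zero.mpr <| .inl
      ⟨fun ⟨_, hu⟩ ↦ not_isSquare_trace_of_mul_sub_pow_card_eq hK hchar hb hu ht⟩

/-- For q = 3^m and b ∈ F_{q²}^*, δ(b) = 2 if Tr_{F_{q²}/F_q}(b) is a nonsquare
of F_q, and δ(b) = 0 if it is a square (possibly zero). -/
theorem delta_char_three (m q : ℕ) (hm : 0 < m) (hq : q = 3 ^ m)
    (F K : Type*) [Field F] [Field K] [Algebra F K] [Fintype F] [Fintype K]
    (hF : Fintype.card F = q) (hK : Fintype.card K = q ^ 2)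
    (b : K) (hb : b ≠ 0) :
    (¬ IsSquare (Algebra.trace F K b) →
      Nat.card {u : K // 2 * u ^ (q + 1) + u ^ 2 = b} = 2) ∧
    (IsSquare (Algebra.trace F K b) →
      Nat.card {u : K // 2 * u ^ (q + 1) + u ^ 2 = b} = 0) :=
  delta_char_three_general m q hq F K hF hK b hb
end

section
/- Let q = p^m with p > 3 an odd prime, and let δ(b) = #{u ∈ F_{q^2} : 2u^{q+1} + u^2 = b}. Then δ(3) = 4 if q ≡ 5 (mod 6), and δ(3) = 2 otherwise. -/
/-!
Write `φ x = x ^ q` for the Frobenius involution of `𝔽_{q²}`. Applying `φ` to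
`2 u φ(u) + u² = 3` gives `2 u φ(u) + φ(u)² = 3`, so `φ(u) = ±u`: either `φ(u) = u` and `u² = 1`,
or `φ(u) = -u` and `u² = -3`. The first case gives `u = ±1`. Since `3 ∣ q² - 1`, the field
contains a primitive cube root of unity `ω`, and `s = 2ω + 1` is a square root of `-3`; then
`φ(s) = 2ω^q + 1` equals `-s` exactly when `q ≡ 2 (mod 3)`, in which case `±s` are two more
solutions.
-/

section Involution

variable {K : Type*} [Field K] (φ : K →+* K)

theorem two_mul_mul_map_add_sq_eq_three_iff (hφ : Function.Involutive φ) (h3 : (3 : K) ≠ 0)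
    (u : K) : 2 * u * φ u + u ^ 2 = 3 ↔ (φ u = u ∧ u ^ 2 = 1) ∨ (φ u = -u ∧ u ^ 2 = -3) := by
  constructor
  · intro h
    have hconj : 2 * u * φ u + φ u ^ 2 = 3 := by
      simpa [map_ofNat, hφ u, mul_right_comm] using congrArg φ h
    rcases sq_eq_sq_iff_eq_or_eq_neg.1 (by linear_combination hconj - h : φ u ^ 2 = u ^ 2)
      with e | e
    · rw [e] at h
      exact .inl ⟨e, mul_left_cancel₀ h3 (by linear_combination h)⟩
    · rw [e] at h
      exact .inr ⟨e, by linear_combination -h⟩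
  · rintro (⟨e, h⟩ | ⟨e, h⟩) <;> rw [e]
    · linear_combination 3 * h
    · linear_combination -h

theorem two_mul_mul_map_add_sq_eq_three_iff_of_sq_eq (hφ : Function.Involutive φ)
    (h3 : (3 : K) ≠ 0) {s : K} (hs : s ^ 2 = -3) (u : K) :
    2 * u * φ u + u ^ 2 = 3 ↔ u = 1 ∨ u = -1 ∨ (φ s = -s ∧ (u = s ∨ u = -s)) := by
  rw [two_mul_mul_map_add_sq_eq_three_iff φ hφ h3, ← hs, sq_eq_one_iff,
    sq_eq_sq_iff_eq_or_eq_neg]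
  constructor
  · rintro (⟨-, h⟩ | ⟨hu, rfl | rfl⟩)
    · exact h.imp_right .inl
    · exact .inr (.inr ⟨hu, .inl rfl⟩)
    · exact .inr (.inr ⟨neg_eq_iff_eq_neg.1 (by simpa using hu), .inr rfl⟩)
  · rintro (rfl | rfl | ⟨hs', rfl | rfl⟩)
    · simp
    · simp
    · exact .inr ⟨hs', .inl rfl⟩
    · exact .inr ⟨by simp [hs'], .inr rfl⟩

theorem ncard_setOf_two_mul_mul_map_add_sq_eq_three [DecidableEq K] (hφ : Function.Involutive φ)
    (h2 : (2 : K) ≠ 0) (h3 : (3 : K) ≠ 0) {s : K} (hs : s ^ 2 = -3) :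
    {u | 2 * u * φ u + u ^ 2 = 3}.ncard = if φ s = -s then 4 else 2 := by
  have hsol := two_mul_mul_map_add_sq_eq_three_iff_of_sq_eq φ hφ h3 hs
  have hne_neg : ∀ x : K, x ≠ 0 → x ≠ -x := fun x hx h ↦
    mul_ne_zero h2 hx (by linear_combination h)
  have hs0 : s ≠ 0 := by rintro rfl; exact h3 (by linear_combination hs)
  have hs1 : s ^ 2 ≠ 1 := fun h ↦ mul_ne_zero h2 h2 (by linear_combination hs - h)
  split_ifs with hφs
  · have hset : {u | 2 * u * φ u + u ^ 2 = 3} = {1, -1} ∪ {s, -s} := by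
      ext u
      simp only [Set.mem_ofPred_eq, hsol, hφs, true_and, Set.mem_union, or_assoc,
        Set.mem_insert_iff, Set.mem_singleton_iff]
    have hdisj : Disjoint ({1, -1} : Set K) {s, -s} :=
      Set.disjoint_left.2 fun u h1 hs' ↦ hs1 <| by
        rw [← sq_eq_one_iff.2 h1]
        exact (sq_eq_sq_iff_eq_or_eq_neg.2 hs').symm
    rw [hset, Set.ncard_union_eq hdisj, Set.ncard_pair (hne_neg 1 one_ne_zero),
      Set.ncard_pair (hne_neg s hs0)]
  · have hset : {u | 2 * u * φ u + u ^ 2 = 3} = {1, -1} := by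
      ext u
      simp only [Set.mem_ofPred_eq, hsol, hφs, false_and, or_false, Set.mem_insert_iff,
        Set.mem_singleton_iff]
    rw [hset, Set.ncard_pair (hne_neg 1 one_ne_zero)]

theorem map_two_mul_add_one_eq_neg_iff {q : ℕ} (hφ : ∀ x, φ x = x ^ q) (h2 : (2 : K) ≠ 0)
    (h3 : (3 : K) ≠ 0) {ω : K} (hω : ω ^ 2 + ω + 1 = 0) :
    φ (2 * ω + 1) = -(2 * ω + 1) ↔ q % 3 = 2 := by
  have hω3 : ω ^ 3 = 1 := by linear_combination (ω - 1) * hω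
  have hωq : ω ^ q = ω ^ (q % 3) := by
    conv_lhs => rw [← Nat.mod_add_div q 3, pow_add, pow_mul, hω3, one_pow, mul_one]
  rw [map_add, map_mul, map_ofNat, map_one, hφ, hωq]
  obtain h | h | h : q % 3 = 0 ∨ q % 3 = 1 ∨ q % 3 = 2 := by omega
  all_goals simp only [h, OfNat.zero_ne_ofNat, OfNat.one_ne_ofNat, iff_false, iff_true]
  · intro e
    exact h3 (mul_left_cancel₀ h2 (by linear_combination 2 * hω - (ω - 1) * e))
  · intro e
    have e' : 2 * ω + 1 = 0 := mul_left_cancel₀ h2 (by linear_combination e)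
    exact h3 (by linear_combination 4 * hω - (2 * ω + 1) * e')
  · linear_combination 2 * hω

end Involution

namespace FiniteField

variable {K : Type*} [Field K] [Fintype K]

theorem natCast_ne_zero_of_coprime_card {n : ℕ} (hn : n.Coprime (Fintype.card K)) :
    (n : K) ≠ 0 := fun h ↦ CharP.ringChar_ne_one <|
  Nat.eq_one_of_dvd_coprimes hn (ringChar.dvd h) (ringChar.dvd (cast_card_eq_zero K))

theorem exists_ringHom_eq_pow_of_dvd_card {q : ℕ} (hq : q ∣ Fintype.card K) :
    ∃ φ : K →+* K, ∀ x, φ x = x ^ q := by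
  obtain ⟨n, hp, hcard⟩ := card K (ringChar K)
  obtain ⟨i, -, rfl⟩ := (Nat.dvd_prime_pow hp).1 (hcard ▸ hq)
  have : ExpChar K (ringChar K) := ExpChar.prime hp
  exact ⟨iterateFrobenius K (ringChar K) i, fun _ ↦ rfl⟩

theorem exists_sq_add_self_add_one_eq_zero (h : 3 ∣ Fintype.card K - 1) :
    ∃ ω : K, ω ^ 2 + ω + 1 = 0 := by
  classical
  have : Fact (Nat.Prime 3) := ⟨Nat.prime_three⟩
  obtain ⟨ω, hω⟩ := exists_prime_orderOf_dvd_card (G := Kˣ) 3 (by rwa [Fintype.card_units])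
  have h := (IsPrimitiveRoot.orderOf (ω : K)).geom_sum_eq_zero
  rw [orderOf_units, hω] at h
  refine ⟨ω, ?_⟩
  simp only [Finset.sum_range_succ, Finset.sum_range_zero, pow_zero, pow_one] at h
  linear_combination h (by norm_num)

theorem natCard_two_mul_pow_succ_add_sq_eq_three {q : ℕ} (hK : Fintype.card K = q ^ 2)
    (hq : q.Coprime 6) :
    Nat.card {u : K // 2 * u ^ (q + 1) + u ^ 2 = 3} = if q % 6 = 5 then 4 else 2 := by
  classical
  have hcast : ∀ n : ℕ, n ∣ 6 → (n : K) ≠ 0 := fun n hn ↦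
    natCast_ne_zero_of_coprime_card (hK ▸ ((hq.coprime_dvd_right hn).symm.pow_right 2))
  have h2 : (2 : K) ≠ 0 := by exact_mod_cast hcast 2 (by norm_num)
  have h3 : (3 : K) ≠ 0 := by exact_mod_cast hcast 3 (by norm_num)
  have hq2 : q % 2 = 1 :=
    Nat.odd_iff.1 (Nat.coprime_two_right.1 (hq.coprime_dvd_right (by norm_num)))
  have hq3 : ¬ 3 ∣ q :=
    Nat.prime_three.coprime_iff_not_dvd.1 (hq.coprime_dvd_right (by norm_num)).symm
  obtain ⟨φ, hφ⟩ := exists_ringHom_eq_pow_of_dvd_card (K := K) (hK ▸ dvd_pow_self q two_ne_zero)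
  have hinv : Function.Involutive φ := fun x ↦ by
    rw [hφ, hφ, ← pow_mul, ← sq, ← hK, pow_card]
  obtain ⟨ω, hω⟩ := exists_sq_add_self_add_one_eq_zero (K := K) <| by
    have : q ^ 2 % 3 = 1 := by
      obtain h | h : q % 3 = 1 ∨ q % 3 = 2 := by omega
      all_goals simp [Nat.pow_mod, h]
    omega
  have hset : {u : K | 2 * u ^ (q + 1) + u ^ 2 = 3} = {u | 2 * u * φ u + u ^ 2 = 3} := by
    ext u; rw [Set.mem_ofPred_eq, Set.mem_ofPred_eq, hφ, pow_succ', mul_assoc]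
  rw [← Set.coe_ofPred, Nat.card_coe_set_eq, hset,
    ncard_setOf_two_mul_mul_map_add_sq_eq_three φ hinv h2 h3 (s := 2 * ω + 1)
      (by linear_combination 4 * hω)]
  exact if_congr ((map_two_mul_add_one_eq_neg_iff φ hφ h2 h3 hω).trans (by omega)) rfl rfl

end FiniteField

theorem delta_three_general (p m q : ℕ) (hp : p.Prime) (hp3 : 3 < p) (hq : q = p ^ m)
    (K : Type*) [Field K] [Fintype K] (hK : Fintype.card K = q ^ 2) :
    Nat.card {u : K // 2 * u ^ (q + 1) + u ^ 2 = 3}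
      = if q % 6 = 5 then 4 else 2 := by
  refine FiniteField.natCard_two_mul_pow_succ_add_sq_eq_three hK (hq ▸ .pow_left m ?_)
  rw [hp.coprime_iff_not_dvd, show 6 = 2 * 3 from rfl]
  intro h
  rcases hp.dvd_mul.1 h with h | h <;> have := Nat.le_of_dvd (by norm_num) h <;> omega

/-- For p > 3, δ(3) = 4 if q ≡ 5 (mod 6) and δ(3) = 2 otherwise. -/
theorem delta_three (p m q : ℕ) (hp : p.Prime) (hodd : Odd p) (hp3 : 3 < p)
    (hm : 0 < m) (hq : q = p ^ m)
    (K : Type*) [Field K] [Fintype K] (hK : Fintype.card K = q ^ 2) :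
    Nat.card {u : K // 2 * u ^ (q + 1) + u ^ 2 = 3}
      = if q % 6 = 5 then 4 else 2 :=
  delta_three_general p m q hp hp3 hq K hK
end

section
/- Let q = p^m with p > 3 and q ≡ 5 (mod 6). Then the number of b ∈ F_{q^2}^* such that the equation 2u^{q+1} + u^2 = b has exactly 2 solutions u ∈ F_{q^2} is exactly q - 1. -/
/-!
Let `σ` be the `q`-Frobenius of `K`, an involution, and `b = 2 u σ(u) + u ^ 2`. Eliminating
`σ u` between `b` and `σ b` shows that `u ^ 2` is a root of `3 X ^ 2 + (4 σ b - 2 b) X - b ^ 2`.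
Since `q ≡ 2 (mod 3)` there is `s` with `s ^ 2 = -1/3` and `σ s = -s`, and then `s b / u` is
again a solution, whose square is the other root. So a nonzero `b` has exactly two solutions
iff this quadratic has a double root, i.e. iff `σ u / u` is a primitive cube root of unity for a
solution `u`. There are `2 (q - 1)` such `u`, and they are paired off by `u ↦ -u`.
-/

lemma ne_neg_of_ne_zero {K : Type*} [Field K] (h2 : (2 : K) ≠ 0) {u : K} (hu : u ≠ 0) :
    u ≠ -u :=
  fun h => hu (mul_left_cancel₀ h2 (by linear_combination h))

lemma one_add_add_sq_eq_zero_iff {K : Type*} [Field K] (h3 : (3 : K) ≠ 0) {t : K} :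
    1 + t + t ^ 2 = 0 ↔ t ^ 3 = 1 ∧ t ≠ 1 := by
  refine ⟨fun h => ⟨by linear_combination (t - 1) * h, ?_⟩, fun ⟨h, ht⟩ => ?_⟩
  · rintro rfl
    exact h3 (by linear_combination h)
  · have : (t - 1) * (1 + t + t ^ 2) = 0 := by linear_combination h
    exact (mul_eq_zero.1 this).resolve_left (sub_ne_zero.2 ht)

lemma Set.ncard_eq_two_mul_ncard_image {α β : Type*} {f : α → β} {s : Set α} (hs : s.Finite)
    (h : ∀ a ∈ s, {x ∈ s | f x = f a}.ncard = 2) : s.ncard = 2 * (f '' s).ncard := by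
  classical
  lift s to Finset α using hs
  rw [← Finset.coe_image, Set.ncard_coe_finset, Set.ncard_coe_finset,
    Finset.card_eq_sum_card_image f s, Finset.sum_const_nat (m := 2), mul_comm]
  rintro _ hb
  obtain ⟨a, ha, rfl⟩ := Finset.mem_image.1 hb
  rw [← Set.ncard_coe_finset, Finset.coe_filter]
  exact h a ha

section TwistedSquare

variable {K : Type*} [Field K] (σ : K →+* K)

/-- For `σ x = x ^ q` this is `u ↦ 2 u ^ (q + 1) + u ^ 2`, whose fibre sizes are `δ`. -/
def twistedSquare (u : K) : K := 2 * (σ u * u) + u ^ 2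

/-- `σ u = ω u` for a primitive cube root of unity `ω`. -/
def IsCubeTwisted (u : K) : Prop := u ≠ 0 ∧ u ^ 2 + u * σ u + σ u ^ 2 = 0

variable {σ}

@[simp]
lemma twistedSquare_zero : twistedSquare σ 0 = 0 := by simp [twistedSquare]

@[simp]
lemma twistedSquare_neg (u : K) : twistedSquare σ (-u) = twistedSquare σ u := by
  simp [twistedSquare]

lemma IsCubeTwisted.neg {u : K} (hu : IsCubeTwisted σ u) : IsCubeTwisted σ (-u) :=
  ⟨neg_ne_zero.2 hu.1, by rw [map_neg]; linear_combination hu.2⟩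

lemma map_twistedSquare (hσ : Function.Involutive σ) (u : K) :
    σ (twistedSquare σ u) = 2 * (σ u * u) + σ u ^ 2 := by
  simp only [twistedSquare, map_add, map_mul, map_pow, map_ofNat, hσ u]
  ring

lemma quadratic_sq_eq_zero (hσ : Function.Involutive σ) (w : K) :
    3 * (w ^ 2) ^ 2 + (4 * σ (twistedSquare σ w) - 2 * twistedSquare σ w) * w ^ 2
      - twistedSquare σ w ^ 2 = 0 := by
  rw [map_twistedSquare hσ, twistedSquare]
  ring

lemma IsCubeTwisted.twistedSquare_sq {u : K} (hu : IsCubeTwisted σ u) :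
    twistedSquare σ u ^ 2 = -3 * (u ^ 2) ^ 2 := by
  rw [twistedSquare]
  linear_combination 4 * u ^ 2 * hu.2

lemma IsCubeTwisted.twistedSquare_ne_zero (h3 : (3 : K) ≠ 0) {u : K} (hu : IsCubeTwisted σ u) :
    twistedSquare σ u ≠ 0 := by
  intro h
  have := hu.twistedSquare_sq
  rw [h, zero_pow two_ne_zero] at this
  exact mul_ne_zero (neg_ne_zero.2 h3) (pow_ne_zero 2 (pow_ne_zero 2 hu.1)) this.symm

/-- On cube-twisted points the quadratic of `quadratic_sq_eq_zero` is `3 (X - u ^ 2) ^ 2`. -/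
lemma IsCubeTwisted.twistedSquare_eq_iff (hσ : Function.Involutive σ) (h3 : (3 : K) ≠ 0)
    {u : K} (hu : IsCubeTwisted σ u) {w : K} :
    twistedSquare σ w = twistedSquare σ u ↔ w = u ∨ w = -u := by
  refine ⟨fun h => ?_, by rintro (rfl | rfl) <;> simp⟩
  have hw := quadratic_sq_eq_zero hσ w
  have hlin : 4 * σ (twistedSquare σ u) - 2 * twistedSquare σ u = -6 * u ^ 2 := by
    rw [map_twistedSquare hσ, twistedSquare]
    linear_combination 4 * hu.2
  rw [h, hlin, hu.twistedSquare_sq] at hw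
  have hsq : 3 * ((w - u) * (w + u)) ^ 2 = 0 := by linear_combination hw
  have := pow_eq_zero_iff (n := 2) (by norm_num) |>.1 ((mul_eq_zero.1 hsq).resolve_left h3)
  rcases mul_eq_zero.1 this with h | h
  · exact Or.inl (by linear_combination h)
  · exact Or.inr (by linear_combination h)

/-- `s = 1 / √-3` swaps the two roots of `quadratic_sq_eq_zero`, whose product is `-b ^ 2 / 3`. -/
lemma twistedSquare_mul_div (hσ : Function.Involutive σ) {s : K} (hs : 3 * s ^ 2 = -1)
    (hσs : σ s = -s) {u : K} (hu : u ≠ 0) :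
    twistedSquare σ (s * twistedSquare σ u / u) = twistedSquare σ u := by
  have hσu : σ u ≠ 0 := (map_ne_zero σ).2 hu
  rw [twistedSquare, map_div₀, map_mul, hσs, map_twistedSquare hσ, twistedSquare]
  field_simp
  linear_combination (-2 * σ u * u - u ^ 2) * hs

lemma sq_mul_div_ne_sq (h2 : (2 : K) ≠ 0) {s : K} (hs : 3 * s ^ 2 = -1) {u : K} (hu : u ≠ 0)
    (htw : ¬IsCubeTwisted σ u) :
    (s * twistedSquare σ u / u) ^ 2 ≠ u ^ 2 := by
  intro h
  refine htw ⟨hu, ?_⟩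
  have h4 : (2 * u) ^ 2 * (u ^ 2 + u * σ u + σ u ^ 2) = 0 := by
    field_simp at h
    rw [twistedSquare] at h
    linear_combination (2 * (σ u * u) + u ^ 2) ^ 2 * hs - 3 * h
  exact (mul_eq_zero.1 h4).resolve_left (pow_ne_zero 2 (mul_ne_zero h2 hu))

lemma ncard_preimage_twistedSquare_ne_two (hσ : Function.Involutive σ) (h2 : (2 : K) ≠ 0)
    {s : K} (hs : 3 * s ^ 2 = -1) (hσs : σ s = -s) {u : K} (hu : u ≠ 0)
    (htw : ¬IsCubeTwisted σ u) : (twistedSquare σ ⁻¹' {twistedSquare σ u}).ncard ≠ 2 := by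
  rcases (twistedSquare σ ⁻¹' {twistedSquare σ u}).finite_or_infinite with hfin | hinf
  · have hv := sq_mul_div_ne_sq h2 hs hu htw
    refine (Set.two_lt_ncard_iff hfin |>.2 ⟨u, -u, s * twistedSquare σ u / u, rfl,
      twistedSquare_neg u, twistedSquare_mul_div hσ hs hσs hu, ?_, ?_, ?_⟩).ne'
    · exact ne_neg_of_ne_zero h2 hu
    · exact fun h => hv (by rw [← h])
    · exact fun h => hv (by rw [← h, neg_sq])
  · simp [hinf.ncard]

lemma IsCubeTwisted.preimage_twistedSquare (hσ : Function.Involutive σ) (h3 : (3 : K) ≠ 0)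
    {u : K} (hu : IsCubeTwisted σ u) : twistedSquare σ ⁻¹' {twistedSquare σ u} = {u, -u} := by
  ext w
  exact hu.twistedSquare_eq_iff hσ h3

lemma setOf_ncard_preimage_twistedSquare_eq_two (hσ : Function.Involutive σ) (h2 : (2 : K) ≠ 0)
    (h3 : (3 : K) ≠ 0) {s : K} (hs : 3 * s ^ 2 = -1) (hσs : σ s = -s) :
    {b | b ≠ 0 ∧ (twistedSquare σ ⁻¹' {b}).ncard = 2}
      = twistedSquare σ '' {u | IsCubeTwisted σ u} := by
  ext b
  constructor
  · rintro ⟨hb, h⟩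
    obtain ⟨u, rfl⟩ : ∃ u, twistedSquare σ u = b :=
      Set.nonempty_of_ncard_ne_zero (by omega : (twistedSquare σ ⁻¹' {b}).ncard ≠ 0)
    have hu : u ≠ 0 := by rintro rfl; exact hb twistedSquare_zero
    by_contra hnot
    exact ncard_preimage_twistedSquare_ne_two hσ h2 hs hσs hu
      (fun htw => hnot ⟨u, htw, rfl⟩) h
  · rintro ⟨u, hu, rfl⟩
    refine ⟨hu.twistedSquare_ne_zero h3, ?_⟩
    rw [hu.preimage_twistedSquare hσ h3, Set.ncard_pair (ne_neg_of_ne_zero h2 hu.1)]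

lemma IsCubeTwisted.ncard_sep_twistedSquare_eq (hσ : Function.Involutive σ) (h2 : (2 : K) ≠ 0)
    (h3 : (3 : K) ≠ 0) {u : K} (hu : IsCubeTwisted σ u) :
    {x | IsCubeTwisted σ x ∧ twistedSquare σ x = twistedSquare σ u}.ncard = 2 := by
  have : {x | IsCubeTwisted σ x ∧ twistedSquare σ x = twistedSquare σ u} = {u, -u} := by
    rw [← hu.preimage_twistedSquare hσ h3]
    ext x
    refine ⟨And.right, fun hx => ⟨?_, hx⟩⟩
    rcases (hu.twistedSquare_eq_iff hσ h3).1 hx with rfl | rfl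
    exacts [hu, hu.neg]
  rw [this, Set.ncard_pair (ne_neg_of_ne_zero h2 hu.1)]

lemma isCubeTwisted_iff_of_map_eq_pow {q : ℕ} (hσ : ∀ x, σ x = x ^ q) (hq : q ≠ 0) {u : K} :
    IsCubeTwisted σ u ↔ u ≠ 0 ∧ 1 + u ^ (q - 1) + (u ^ (q - 1)) ^ 2 = 0 := by
  refine and_congr_right fun hu => ?_
  have hσu : σ u = u ^ (q - 1) * u := by rw [hσ, ← pow_succ, Nat.sub_add_cancel (by omega)]
  rw [hσu, show u ^ 2 + u * (u ^ (q - 1) * u) + (u ^ (q - 1) * u) ^ 2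
    = u ^ 2 * (1 + u ^ (q - 1) + (u ^ (q - 1)) ^ 2) by ring, mul_eq_zero,
    or_iff_right (pow_ne_zero 2 hu)]

end TwistedSquare

lemma card_sub_one_eq_of_card_eq_sq {K : Type*} [Fintype K] {q : ℕ}
    (hK : Fintype.card K = q ^ 2) :
    Fintype.card K - 1 = (q + 1) * (q - 1) := by
  simpa [hK] using Nat.sq_sub_sq q 1

section FiniteField

variable {K : Type*} [Field K] [Fintype K] {q : ℕ}

lemma exists_ringHom_eq_pow (hK : Fintype.card K = q ^ 2) :
    ∃ σ : K →+* K, ∀ x, σ x = x ^ q := by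
  obtain ⟨p, _, n, hp, hcard⟩ := FiniteField.card' K
  have : Fact p.Prime := ⟨hp⟩
  obtain ⟨k, -, rfl⟩ := (Nat.dvd_prime_pow hp).1 (hcard ▸ hK ▸ Dvd.intro_left _ (sq q).symm)
  exact ⟨iterateFrobenius K p k, fun x => iterateFrobenius_def ..⟩

lemma pow_pow_eq_self_of_card_eq_sq (hK : Fintype.card K = q ^ 2) (x : K) : (x ^ q) ^ q = x := by
  rw [← pow_mul, ← sq, ← hK, FiniteField.pow_card]

lemma natCast_ne_zero_of_coprime_card {n : ℕ} (h : n.Coprime (Fintype.card K)) :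
    (n : K) ≠ 0 := by
  intro hn
  have := Nat.eq_one_of_dvd_coprimes h ((ringChar.spec K n).1 hn)
    ((ringChar.spec K _).1 (FiniteField.cast_card_eq_zero K))
  exact CharP.ringChar_ne_one this

lemma ncard_pow_eq_one {n : ℕ} (hn : 0 < n) (hdvd : n ∣ Fintype.card K - 1) :
    {x : K | x ^ n = 1}.ncard = n := by
  classical
  obtain ⟨g, hg⟩ := IsCyclic.exists_ofOrder_eq_natCard (α := Kˣ)
  rw [Nat.card_eq_fintype_card, Fintype.card_units] at hg
  obtain ⟨ζ, hζ⟩ : ∃ ζ : Kˣ, orderOf ζ = n :=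
    ⟨_, orderOf_pow_orderOf_div (by have := Fintype.one_lt_card (α := K); omega) (hg ▸ hdvd)⟩
  have hprim : IsPrimitiveRoot (ζ : K) n :=
    IsPrimitiveRoot.coe_units_iff.2 (hζ ▸ IsPrimitiveRoot.orderOf ζ)
  have : {x : K | x ^ n = 1} = ↑(Polynomial.nthRootsFinset n (1 : K)) := by
    ext x
    simp [Polynomial.mem_nthRootsFinset hn]
  rw [this, Set.ncard_coe_finset, hprim.card_nthRootsFinset]

lemma exists_three_mul_sq_eq_neg_one {σ : K →+* K} (hσ : ∀ x, σ x = x ^ q)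
    (hK : Fintype.card K = q ^ 2) (h3 : (3 : K) ≠ 0) (hq : q % 3 = 2) :
    ∃ s : K, 3 * s ^ 2 = -1 ∧ σ s = -s := by
  classical
  have h3dvd : 3 ∣ Fintype.card Kˣ := by
    rw [Fintype.card_units, card_sub_one_eq_of_card_eq_sq hK]
    exact Dvd.dvd.mul_right (by omega) _
  obtain ⟨ω, hω⟩ := exists_prime_orderOf_dvd_card 3 h3dvd
  have hprim : IsPrimitiveRoot (ω : K) 3 := IsPrimitiveRoot.coe_units_iff.2 (hω ▸ .orderOf ω)
  have hω0 : 1 + (ω : K) + ω ^ 2 = 0 :=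
    (one_add_add_sq_eq_zero_iff h3).2 ⟨hprim.pow_eq_one, hprim.ne_one (by norm_num)⟩
  have hσω : σ ω = ω ^ 2 := by
    rw [hσ, ← Nat.div_add_mod q 3, hq, pow_add, pow_mul, hprim.pow_eq_one, one_pow, one_mul]
  refine ⟨(2 * ω + 1) / 3, ?_, ?_⟩
  · field_simp
    linear_combination 4 * hω0
  · simp only [map_div₀, map_add, map_mul, map_ofNat, map_one, hσω]
    field_simp
    linear_combination 2 * hω0

lemma ncard_isCubeTwisted {σ : K →+* K} (hσ : ∀ x, σ x = x ^ q) (hK : Fintype.card K = q ^ 2)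
    (h3 : (3 : K) ≠ 0) (hq : q % 3 = 2) : {u : K | IsCubeTwisted σ u}.ncard = 2 * (q - 1) := by
  have hset :
      {u : K | IsCubeTwisted σ u} = {x | x ^ (3 * (q - 1)) = 1} \ {x | x ^ (q - 1) = 1} := by
    ext u
    rw [Set.mem_sdiff, Set.mem_ofPred_eq, Set.mem_ofPred_eq, Set.mem_ofPred_eq,
      isCubeTwisted_iff_of_map_eq_pow hσ (by omega), one_add_add_sq_eq_zero_iff h3, ← pow_mul,
      mul_comm]
    refine ⟨fun h => h.2, fun h => ⟨?_, h⟩⟩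
    rintro rfl
    simp [zero_pow (by omega : 3 * (q - 1) ≠ 0)] at h
  have hsub : {x : K | x ^ (q - 1) = 1} ⊆ {x | x ^ (3 * (q - 1)) = 1} := by
    intro x hx
    rw [Set.mem_ofPred_eq, mul_comm, pow_mul, hx, one_pow]
  have hcard := card_sub_one_eq_of_card_eq_sq hK
  rw [hset, Set.ncard_sdiff hsub,
    ncard_pow_eq_one (by omega) (hcard ▸ Nat.mul_dvd_mul_right (by omega) _),
    ncard_pow_eq_one (by omega) (hcard ▸ Dvd.intro_left _ rfl)]
  omega

end FiniteField

theorem card_delta_eq_two_general (q : ℕ) (h6 : q % 6 = 5)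
    (K : Type*) [Field K] [Fintype K] (hK : Fintype.card K = q ^ 2) :
    Nat.card {b : K // b ≠ 0 ∧
      Nat.card {u : K // 2 * u ^ (q + 1) + u ^ 2 = b} = 2} = q - 1 := by
  obtain ⟨σ, hσ⟩ := exists_ringHom_eq_pow hK
  have hinv : Function.Involutive σ := fun x => by
    rw [hσ, hσ, pow_pow_eq_self_of_card_eq_sq hK]
  have h2 : (2 : K) ≠ 0 := by
    exact_mod_cast natCast_ne_zero_of_coprime_card
      (hK ▸ ((Nat.Prime.coprime_iff_not_dvd Nat.prime_two).2 (by omega)).pow_right 2)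
  have h3 : (3 : K) ≠ 0 := by
    exact_mod_cast natCast_ne_zero_of_coprime_card
      (hK ▸ ((Nat.Prime.coprime_iff_not_dvd Nat.prime_three).2 (by omega)).pow_right 2)
  obtain ⟨s, hs, hσs⟩ := exists_three_mul_sq_eq_neg_one hσ hK h3 (by omega)
  have hf : ∀ u : K, 2 * u ^ (q + 1) + u ^ 2 = twistedSquare σ u := fun u => by
    rw [twistedSquare, hσ, pow_succ]
  simp only [hf]
  change {b | b ≠ 0 ∧ (twistedSquare σ ⁻¹' {b}).ncard = 2}.ncard = q - 1
  have h2to1 := Set.ncard_eq_two_mul_ncard_image (Set.toFinite {u : K | IsCubeTwisted σ u})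
    fun u hu => hu.ncard_sep_twistedSquare_eq hinv h2 h3
  rw [ncard_isCubeTwisted hσ hK h3 (by omega)] at h2to1
  rw [setOf_ncard_preimage_twistedSquare_eq_two hinv h2 h3 hs hσs]
  omega

/-- For p > 3 and q ≡ 5 (mod 6), there are exactly q - 1 elements b ∈ F_{q²}^*
with δ(b) = 2. -/
theorem card_delta_eq_two (p m q : ℕ) (hp : p.Prime) (hodd : Odd p) (hp3 : 3 < p)
    (hm : 0 < m) (hq : q = p ^ m) (h6 : q % 6 = 5)
    (K : Type*) [Field K] [Fintype K] (hK : Fintype.card K = q ^ 2) :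
    Nat.card {b : K // b ≠ 0 ∧
      Nat.card {u : K // 2 * u ^ (q + 1) + u ^ 2 = b} = 2} = q - 1 :=
  card_delta_eq_two_general q h6 K hK
end

section
/- Let q = p^m with p an odd prime and q ≡ 1 (mod 6), and let f(x) = x^{q+2} on F_{q^2}. Then f is APN: for every a ∈ F_{q^2}^* and b ∈ F_{q^2}, the equation f(x+a) - f(x) = b has at most 2 solutions x ∈ F_{q^2}. -/
/-!
Write `σ y = y ^ q`, an involutive automorphism of `F_{q²}`, and
`F y = σ y * y ^ 2 = y ^ (q + 2)` (`twistedCube`). As `F` is multiplicative, the substitution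
`x = a y` turns `F (x + a) - F x = b` into `Δ y = β` with `Δ y = F (y + 1) - F y`, `β = b / F a`.
Since `q ≡ 1 (mod 3)`, a primitive cube root of unity `ζ` lies in `F_q`, so `r = 2ζ + 1` is a
`σ`-invariant square root of `-3`. Then `α y = (y - σ y) + r (y + σ y + 1)` (`sqrtMap`) satisfies
`α y ^ 2 = 2 (r - 1) Δ y - 2 (r + 1) σ (Δ y) + 1`, and `α` is injective because an element that is
both `σ`-invariant and `σ`-anti-invariant is zero. So the solutions `y` inject into the square roots
of a single element: there are at most two.
-/

open Function Polynomial

section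

variable {K : Type*} [Field K]

lemma card_le_two_of_injective_of_sq_eq {R α : Type*} [CommRing R] [IsDomain R] {φ : α → R}
    (hφ : Injective φ) {κ : R} (hsq : ∀ x, φ x ^ 2 = κ) : Nat.card α ≤ 2 := by
  classical
  calc Nat.card α ≤ Nat.card (nthRootsFinset 2 κ) :=
        Nat.card_le_card_of_injective (fun x ↦ ⟨φ x, (mem_nthRootsFinset two_pos κ).2 (hsq x)⟩)
          fun x y hxy ↦ hφ (congrArg Subtype.val hxy)
    _ = (nthRootsFinset 2 κ).card := Nat.card_eq_finsetCard _
    _ ≤ 2 := by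
      rw [nthRootsFinset_def]
      exact (Multiset.toFinset_card_le _).trans (card_nthRoots 2 κ)

section Involution

variable {σ : K →+* K}

def twistedCube (σ : K →+* K) (y : K) : K := σ y * y ^ 2

lemma twistedCube_mul (x y : K) : twistedCube σ (x * y) = twistedCube σ x * twistedCube σ y := by
  simp only [twistedCube, map_mul]
  ring

lemma twistedCube_ne_zero {a : K} (ha : a ≠ 0) : twistedCube σ a ≠ 0 :=
  mul_ne_zero ((map_ne_zero σ).2 ha) (pow_ne_zero 2 ha)

lemma twistedCube_add_sub_twistedCube {a : K} (ha : a ≠ 0) (x : K) :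
    twistedCube σ (x + a) - twistedCube σ x =
      twistedCube σ a * (twistedCube σ (x / a + 1) - twistedCube σ (x / a)) := by
  rw [mul_sub, ← twistedCube_mul, ← twistedCube_mul, mul_add, mul_one, mul_div_cancel₀ x ha,
    add_comm]

def sqrtMap (σ : K →+* K) (r y : K) : K := y - σ y + r * (y + σ y + 1)

lemma eq_zero_of_add_eq_zero_of_map_eq_neg (h2 : (2 : K) ≠ 0) {d u : K} (hd : σ d = -d)
    (hu : σ u = u) (h : d + u = 0) : d = 0 := by
  have hσ := congrArg σ h
  rw [map_add, hd, hu, map_zero] at hσ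
  exact (mul_eq_zero.1 (by linear_combination h - hσ : 2 * d = 0)).resolve_left h2

lemma sqrtMap_injective (hσ : Involutive σ) (h2 : (2 : K) ≠ 0) {r : K} (hr : σ r = r)
    (hr0 : r ≠ 0) : Injective (sqrtMap σ r) := by
  intro y y' h
  set w := y - y'
  have hd : σ (w - σ w) = -(w - σ w) := by rw [map_sub, hσ w]; ring
  have hu : σ (r * (w + σ w)) = r * (w + σ w) := by rw [map_mul, map_add, hσ w, hr]; ring
  have hsum : w - σ w + r * (w + σ w) = 0 := by
    simp only [sqrtMap] at h
    rw [map_sub]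
    linear_combination h
  have hd0 := eq_zero_of_add_eq_zero_of_map_eq_neg h2 hd hu hsum
  have hu0 : w + σ w = 0 :=
    (mul_eq_zero.1 (by linear_combination hsum - hd0 : r * (w + σ w) = 0)).resolve_left hr0
  exact sub_eq_zero.1 <|
    (mul_eq_zero.1 (by linear_combination hd0 + hu0 : 2 * w = 0)).resolve_left h2

lemma sqrtMap_sq (hσ : Involutive σ) {r : K} (hr2 : r ^ 2 = -3) (y : K) :
    sqrtMap σ r y ^ 2 =
      2 * (r - 1) * (twistedCube σ (y + 1) - twistedCube σ y) -
        2 * (r + 1) * σ (twistedCube σ (y + 1) - twistedCube σ y) + 1 := by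
  simp only [sqrtMap, twistedCube, map_sub, map_mul, map_add, map_pow, map_one, hσ y]
  linear_combination (y + σ y + 1) ^ 2 * hr2

theorem card_twistedCube_add_sub_eq_le_two (hσ : Involutive σ) (h2 : (2 : K) ≠ 0) {r : K}
    (hr : σ r = r) (hr2 : r ^ 2 = -3) (hr0 : r ≠ 0) {a : K} (ha : a ≠ 0) (b : K) :
    Nat.card {x : K // twistedCube σ (x + a) - twistedCube σ x = b} ≤ 2 := by
  set β := b / twistedCube σ a
  refine card_le_two_of_injective_of_sq_eq (φ := fun x ↦ sqrtMap σ r (x.1 / a))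
    (κ := 2 * (r - 1) * β - 2 * (r + 1) * σ β + 1)
    (fun x y hxy ↦ Subtype.ext ((div_left_inj' ha).1 (sqrtMap_injective hσ h2 hr hr0 hxy)))
    fun ⟨x, hx⟩ ↦ ?_
  have hΔ : twistedCube σ (x / a + 1) - twistedCube σ (x / a) = β := by
    rw [eq_div_iff (twistedCube_ne_zero ha), mul_comm, ← twistedCube_add_sub_twistedCube ha, hx]
  rw [sqrtMap_sq hσ hr2, hΔ]

end Involution

lemma FiniteField.natCast_ne_zero_of_card_mod_eq_one [Fintype K] {n : ℕ}
    (h : Fintype.card K % n = 1) : (n : K) ≠ 0 := by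
  intro hn
  have hcard := FiniteField.cast_card_eq_zero K
  rw [← Nat.div_add_mod (Fintype.card K) n, h] at hcard
  push_cast at hcard
  rw [hn, zero_mul, zero_add] at hcard
  exact one_ne_zero hcard

lemma IsPrimitiveRoot.two_mul_add_one_sq {R : Type*} [CommRing R] [IsDomain R] {ζ : R} (hζ : IsPrimitiveRoot ζ 3) :
    (2 * ζ + 1) ^ 2 = -3 := by
  have h := hζ.geom_sum_eq_zero (by norm_num)
  simp only [Finset.sum_range_succ, Finset.sum_range_zero] at h
  linear_combination 4 * h

lemma FiniteField.exists_sq_eq_neg_three_map_eq_self [Fintype K] {q : ℕ} (σ : K →+* K)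
    (hσ : ∀ x, σ x = x ^ q) (hK : Fintype.card K % 3 = 1) (hq : q % 3 = 1) :
    ∃ r : K, r ^ 2 = -3 ∧ σ r = r := by
  classical
  have h3 : 3 ∣ Fintype.card Kˣ := by
    rw [Fintype.card_units]
    omega
  have := Fact.mk Nat.prime_three
  obtain ⟨ζ, hζ3⟩ := exists_prime_orderOf_dvd_card 3 h3
  have hζ : IsPrimitiveRoot (ζ : K) 3 :=
    IsPrimitiveRoot.coe_units_iff.2 (IsPrimitiveRoot.iff_orderOf.2 hζ3)
  have hζq : σ ζ = ζ := by
    rw [hσ, ← Nat.div_add_mod q 3, hq, pow_add, pow_mul, hζ.pow_eq_one, one_pow, one_mul, pow_one]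
  exact ⟨2 * ζ + 1, hζ.two_mul_add_one_sq, by rw [map_add, map_mul, map_ofNat, map_one, hζq]⟩

end

theorem power_q_plus_two_APN_general (p m q : ℕ) (hp : p.Prime)
    (hq : q = p ^ m) (h6 : q % 6 = 1)
    (K : Type*) [Field K] [Fintype K] (hK : Fintype.card K = q ^ 2)
    (a b : K) (ha : a ≠ 0) :
    Nat.card {x : K // (x + a) ^ (q + 2) - x ^ (q + 2) = b} ≤ 2 := by
  have := Fact.mk hp
  have : CharP K p := charP_of_card_eq_prime_pow (f := m * 2) (by rw [hK, hq, pow_mul])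
  set σ := iterateFrobenius K p m
  have hσ : ∀ x, σ x = x ^ q := fun x ↦ by rw [hq]; rfl
  have hinv : Involutive σ := fun x ↦ by
    rw [hσ, hσ, ← pow_mul, ← sq, ← hK, FiniteField.pow_card]
  have hK6 : Fintype.card K % 6 = 1 := by rw [hK, Nat.pow_mod, h6]
  have h6K : ((6 : ℕ) : K) ≠ 0 := FiniteField.natCast_ne_zero_of_card_mod_eq_one hK6
  obtain ⟨r, hr2, hr⟩ :=
    FiniteField.exists_sq_eq_neg_three_map_eq_self σ hσ (by omega) (by omega)
  have h2 : (2 : K) ≠ 0 := fun h ↦ h6K (by push_cast; linear_combination 3 * h)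
  have hr0 : r ≠ 0 := fun h ↦ h6K (by push_cast; linear_combination 2 * hr2 - 2 * r * h)
  have hF : ∀ x, x ^ (q + 2) = twistedCube σ x := fun x ↦ by rw [twistedCube, hσ, pow_add]
  simp only [hF]
  exact card_twistedCube_add_sub_eq_le_two hinv h2 hr hr2 hr0 ha b

/-- For q ≡ 1 (mod 6), the power function x ↦ x^{q+2} on F_{q²} is APN:
every derivative equation has at most 2 solutions. -/
theorem power_q_plus_two_APN (p m q : ℕ) (hp : p.Prime) (hodd : Odd p)
    (hm : 0 < m) (hq : q = p ^ m) (h6 : q % 6 = 1)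
    (K : Type*) [Field K] [Fintype K] (hK : Fintype.card K = q ^ 2)
    (a b : K) (ha : a ≠ 0) :
    Nat.card {x : K // (x + a) ^ (q + 2) - x ^ (q + 2) = b} ≤ 2 :=
  power_q_plus_two_APN_general p m q hp hq h6 K hK a b ha
end

section
/- Let q = p^m with p an odd prime and q ≡ 1 (mod 6), and let f(x) = x^{q+2} on F_{q^2}. Then the differential spectrum of f is: δ_f(1,b) = 1 for exactly one value of b, δ_f(1,b) = 2 for exactly (q^2-1)/2 values of b, and δ_f(1,b) = 0 for the remaining (q^2-1)/2 values of b. -/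
lemma core_alg {K : Type*} [Field K] (φ : K →+* K) (hφφ : ∀ x, φ (φ x) = x)
    (u : K) (hu : u ^ 2 = -3) (hφu : φ u = u)
    (h2 : (2:K) ≠ 0) (h3 : (3:K) ≠ 0)
    (y z : K) (h : y^2 + 2*(y * φ y) = z^2 + 2*(z * φ z)) :
    y = z ∨ y = -z := by
  set Y := φ y with hYdef
  set Z := φ z with hZdef
  have hY : φ Y = y := hφφ y
  have hZ : φ Z = z := hφφ z
  have h12 : (12:K) ≠ 0 := by
    have : (12:K) = 2*2*3 := by norm_num
    rw [this]; exact mul_ne_zero (mul_ne_zero h2 h2) h3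
  have E2 : Y^2 + 2*(y*Y) = Z^2 + 2*(z*Z) := by
    have := congrArg φ h
    simpa [map_add, map_mul, map_pow, map_ofNat, hY, hZ, mul_comm] using this
  have key : (y^2 - z^2) * (4*(z^2 + z*Z + Z^2) + 3*(y^2 - z^2)) = 0 := by
    linear_combination (2*z*Z - (y^2 - z^2) + 2*y*Y + 4*y^2) * h - 4*y^2 * E2
  rcases mul_eq_zero.mp key with hd | hstar
  · have : (y - z) * (y + z) = 0 := by linear_combination hd
    rcases mul_eq_zero.mp this with h' | h'
    · exact Or.inl (sub_eq_zero.mp h')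
    · exact Or.inr (eq_neg_of_add_eq_zero_left h')
  · have hy2 : (3*y - u*(z+2*Z)) * (3*y + u*(z+2*Z)) = 0 := by
      linear_combination (-(z+2*Z)^2) * hu + 3 * hstar
    have hD9 : 18*(y*Y) = 6*((2*z+Z)*(z+2*Z)) := by
      linear_combination (9:K)*h - 3*hstar
    have hzz : (z + 2*Z) * (2*z + Z) = 0 := by
      have h120 : 12*((z+2*Z)*(2*z+Z)) = 0 := by
        rcases mul_eq_zero.mp hy2 with c1 | c1
        · have c1 : 3*y = u*(z+2*Z) := by linear_combination c1
          have c2 : 3*Y = u*(Z+2*z) := by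
            have := congrArg φ c1
            simpa [map_add, map_mul, map_ofNat, hφu, hZ] using this
          linear_combination (6*Y)*c1 + (2*u*(z+2*Z))*c2 + (2*(z+2*Z)*(Z+2*z))*hu - hD9
        · have c1 : 3*y = -(u*(z+2*Z)) := by linear_combination c1
          have c2 : 3*Y = -(u*(Z+2*z)) := by
            have := congrArg φ c1
            simpa [map_add, map_mul, map_ofNat, map_neg, hφu, hZ] using this
          linear_combination (6*Y)*c1 - (2*u*(z+2*Z))*c2 + (2*(z+2*Z)*(Z+2*z))*hu - hD9
      have := mul_eq_zero.mp h120
      rcases this with h' | h'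
      · exact absurd h' h12
      · exact h'
    have hz0 : z = 0 := by
      rcases mul_eq_zero.mp hzz with h' | h'
      · have h'' : Z + 2*z = 0 := by
          have := congrArg φ h'
          simpa [map_add, map_mul, map_ofNat, hZ, map_zero] using this
        have : 3*z = 0 := by linear_combination 2*h'' - h'
        exact (mul_eq_zero.mp this).elim (fun hc => absurd hc h3) id
      · have h'' : 2*Z + z = 0 := by
          have := congrArg φ h'
          simpa [map_add, map_mul, map_ofNat, hZ, map_zero] using this
        have : 3*z = 0 := by linear_combination 2*h' - h''
        exact (mul_eq_zero.mp this).elim (fun hc => absurd hc h3) id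
    have hZ0 : Z = 0 := by rw [hZdef, hz0, map_zero]
    have hy0 : y = 0 := by
      have h3y : 3*(y^2) = 0 := by
        rw [hz0, hZ0] at hstar; linear_combination hstar
      have := (mul_eq_zero.mp h3y).elim (fun hc => absurd hc h3) id
      exact pow_eq_zero_iff (n := 2) (by norm_num) |>.mp this
    exact Or.inl (by rw [hy0, hz0])

open Finset in
lemma counting {K : Type*} [Field K] [Fintype K] (h2 : (2:K) ≠ 0)
    (g : K → K) (heven : ∀ y, g (-y) = g y)
    (hinj : ∀ y z, g y = g z → y = z ∨ y = -z) :
    Nat.card {b : K // Nat.card {x : K // g x = b} = 1} = 1 ∧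
    2 * Nat.card {b : K // Nat.card {x : K // g x = b} = 2} = Fintype.card K - 1 ∧
    2 * Nat.card {b : K // Nat.card {x : K // g x = b} = 0} = Fintype.card K - 1 := by
  classical
  have hne : ∀ y : K, y ≠ 0 → y ≠ -y := by
    intro y hy hc
    apply hy
    have : 2 * y = 0 := by linear_combination hc
    exact (mul_eq_zero.mp this).elim (fun h => absurd h h2) id
  -- fiber description
  have hfib : ∀ y : K, {x : K | g x = g y} = {y, -y} := by
    intro y
    ext x
    simp only [Set.mem_setOf_eq, Set.mem_insert_iff, Set.mem_singleton_iff]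
    constructor
    · exact fun h => hinj x y h
    · rintro (rfl | rfl)
      · rfl
      · exact heven y
  have hcard2 : ∀ y : K, y ≠ 0 → Nat.card {x : K // g x = g y} = 2 := by
    intro y hy
    have e : Nat.card {x : K // g x = g y} = Nat.card ({y, -y} : Set K) :=
      Nat.card_congr (Equiv.setCongr (hfib y))
    rw [e, Nat.card_coe_set_eq, Set.ncard_pair (hne y hy)]
  have hcard1 : Nat.card {x : K // g x = g 0} = 1 := by
    have e : Nat.card {x : K // g x = g 0} = Nat.card ({0, -0} : Set K) :=
      Nat.card_congr (Equiv.setCongr (hfib 0))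
    rw [e, Nat.card_coe_set_eq]; simp
  have hzero : ∀ b : K, b ∉ Set.range g → Nat.card {x : K // g x = b} = 0 := by
    intro b hb
    rw [Nat.card_eq_zero]
    left
    constructor
    intro ⟨x, hx⟩
    exact hb ⟨x, hx⟩
  -- the three finsets
  set P1 := (univ : Finset K).filter (fun b => Nat.card {x : K // g x = b} = 1) with hP1
  set P2 := (univ : Finset K).filter (fun b => Nat.card {x : K // g x = b} = 2) with hP2
  set P0 := (univ : Finset K).filter (fun b => Nat.card {x : K // g x = b} = 0) with hP0
  have hconv : ∀ (i : ℕ), Nat.card {b : K // Nat.card {x : K // g x = b} = i}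
      = ((univ : Finset K).filter (fun b => Nat.card {x : K // g x = b} = i)).card := by
    intro i
    rw [Nat.card_eq_fintype_card, Fintype.card_subtype]
  -- P1 = {g 0}
  have hP1eq : P1 = {g 0} := by
    rw [hP1]
    apply Finset.eq_singleton_iff_unique_mem.mpr
    constructor
    · simp only [Finset.mem_filter, Finset.mem_univ, true_and]
      exact hcard1
    · intro b hb
      simp only [Finset.mem_filter, Finset.mem_univ, true_and] at hb
      have hbr : ∃ y, g y = b := by
        by_contra hc
        push_neg at hc
        rw [hzero b (by rintro ⟨y, hy⟩; exact hc y hy)] at hb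
        omega
      obtain ⟨y, rfl⟩ := hbr
      rcases eq_or_ne y 0 with rfl | hy
      · rfl
      · rw [hcard2 y hy] at hb; omega
  -- P2 = image of nonzero
  have hP2eq : P2 = ((univ : Finset K).filter (· ≠ (0:K))).image g := by
    ext b
    simp only [hP2, Finset.mem_filter, Finset.mem_univ, true_and, Finset.mem_image,
      Finset.mem_filter]
    constructor
    · intro hb
      have hbr : ∃ y, g y = b := by
        by_contra hc
        push_neg at hc
        rw [hzero b (by rintro ⟨y, hy⟩; exact hc y hy)] at hb
        omega
      obtain ⟨y, rfl⟩ := hbr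
      rcases eq_or_ne y 0 with rfl | hy
      · rw [hcard1] at hb; omega
      · exact ⟨y, by simpa using hy, rfl⟩
    · rintro ⟨y, hy, rfl⟩
      exact hcard2 y (by simpa using hy)
  have hcount2 : 2 * P2.card = Fintype.card K - 1 := by
    have hs := Finset.card_eq_sum_card_image g ((univ : Finset K).filter (· ≠ (0:K)))
    have hsum : ∀ b ∈ ((univ : Finset K).filter (· ≠ (0:K))).image g,
        (((univ : Finset K).filter (· ≠ (0:K))).filter (fun x => g x = b)).card = 2 := by
      intro b hb
      simp only [Finset.mem_image, Finset.mem_filter, Finset.mem_univ, true_and] at hb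
      obtain ⟨y, hy, rfl⟩ := hb
      have : (((univ : Finset K).filter (· ≠ (0:K))).filter (fun x => g x = g y))
          = {y, -y} := by
        ext x
        simp only [Finset.mem_filter, Finset.mem_univ, true_and, Finset.mem_insert,
          Finset.mem_singleton]
        constructor
        · exact fun h => hinj x y h.2
        · rintro (rfl | rfl)
          · exact ⟨hy, rfl⟩
          · exact ⟨fun hc => hy (by simpa using congrArg Neg.neg hc), heven y⟩
      rw [this, Finset.card_insert_of_notMem (by simpa using hne y hy), Finset.card_singleton]
    rw [Finset.sum_congr rfl hsum, Finset.sum_const, smul_eq_mul] at hs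
    have hcne : ((univ : Finset K).filter (· ≠ (0:K))).card = Fintype.card K - 1 := by
      rw [Finset.filter_ne' univ (0:K), Finset.card_erase_of_mem (Finset.mem_univ 0),
        Finset.card_univ]
    rw [hP2eq, mul_comm]
    rw [hcne] at hs
    exact hs.symm
  -- cover
  have hcover : ∀ b : K, Nat.card {x : K // g x = b} = 0 ∨ Nat.card {x : K // g x = b} = 1
      ∨ Nat.card {x : K // g x = b} = 2 := by
    intro b
    by_cases hb : ∃ y, g y = b
    · obtain ⟨y, rfl⟩ := hb
      rcases eq_or_ne y 0 with rfl | hy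
      · right; left; exact hcard1
      · right; right; exact hcard2 y hy
    · left; exact hzero b (by rintro ⟨y, hy⟩; exact hb ⟨y, hy⟩)
  have htot : P0.card + (P1.card + P2.card) = Fintype.card K := by
    have h1 := Finset.card_filter_add_card_filter_not
      (s := (univ : Finset K)) (p := fun b => Nat.card {x : K // g x = b} = 0)
    have h2' : (univ : Finset K).filter (fun b => ¬ Nat.card {x : K // g x = b} = 0)
        = P1 ∪ P2 := by
      ext b
      simp only [Finset.mem_filter, Finset.mem_univ, true_and, Finset.mem_union, hP1, hP2,
        Finset.mem_filter, Finset.mem_univ, true_and]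
      have := hcover b
      omega
    have hdisj : Disjoint P1 P2 := by
      rw [Finset.disjoint_left]
      intro b hb1 hb2
      simp only [hP1, hP2, Finset.mem_filter] at hb1 hb2
      omega
    rw [h2', Finset.card_union_of_disjoint hdisj, Finset.card_univ] at h1
    exact h1
  have hcard1' : P1.card = 1 := by rw [hP1eq]; simp
  refine ⟨?_, ?_, ?_⟩
  · rw [hconv 1, ← hP1, hP1eq]; simp
  · rw [hconv 2, ← hP2]; exact hcount2
  · rw [hconv 0, ← hP0]
    have hq1 : 1 ≤ Fintype.card K := Fintype.card_pos
    omega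

/-- Differential spectrum of x^{q+2} over F_{q²} when q ≡ 1 (mod 6):
ω₁ = 1, ω₂ = (q²-1)/2, ω₀ = (q²-1)/2. -/
theorem diff_spectrum_q_one_mod_six (p m q : ℕ) (hp : p.Prime) (hodd : Odd p)
    (hm : 0 < m) (hq : q = p ^ m) (h6 : q % 6 = 1)
    (K : Type*) [Field K] [Fintype K] (hK : Fintype.card K = q ^ 2) :
    Nat.card {b : K // Nat.card {x : K // (x + 1) ^ (q + 2) - x ^ (q + 2) = b} = 1} = 1 ∧
    2 * Nat.card {b : K //
        Nat.card {x : K // (x + 1) ^ (q + 2) - x ^ (q + 2) = b} = 2} = q ^ 2 - 1 ∧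
    2 * Nat.card {b : K //
        Nat.card {x : K // (x + 1) ^ (q + 2) - x ^ (q + 2) = b} = 0} = q ^ 2 - 1 := by
  classical
  have hp2 : p ≠ 2 := by rintro rfl; exact (by norm_num : ¬ Odd 2) hodd
  have hqodd : q % 2 = 1 := Nat.odd_iff.mp (hq ▸ hodd.pow)
  have hp3 : p ≠ 3 := by
    rintro rfl
    have h3 : 3 ∣ q := hq ▸ dvd_pow_self 3 hm.ne'
    omega
  -- characteristic of K is p
  have hKcard : Fintype.card K = p ^ (2 * m) := by
    rw [hK, hq, ← pow_mul, mul_comm]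
  haveI : CharP K (ringChar K) := ringChar.charP K
  have hrp : ringChar K = p := by
    have hrpr : (ringChar K).Prime := CharP.char_is_prime K (ringChar K)
    obtain ⟨n, -, hcard⟩ := FiniteField.card K (ringChar K)
    have hdvd : p ∣ ringChar K ^ (n : ℕ) := by
      rw [← hcard, hKcard]; exact dvd_pow_self p (by positivity)
    exact ((Nat.prime_dvd_prime_iff_eq hp hrpr).mp (hp.dvd_of_dvd_pow hdvd)).symm
  haveI : CharP K p := hrp ▸ ringChar.charP K
  haveI : ExpChar K p := .prime hp
  have h2K : (2:K) ≠ 0 := by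
    intro h
    have : ((2:ℕ):K) = 0 := by exact_mod_cast h
    have := (Nat.prime_dvd_prime_iff_eq hp Nat.prime_two).mp
      ((CharP.cast_eq_zero_iff K p 2).mp this)
    exact hp2 this
  have h3K : (3:K) ≠ 0 := by
    intro h
    have : ((3:ℕ):K) = 0 := by exact_mod_cast h
    have := (Nat.prime_dvd_prime_iff_eq hp Nat.prime_three).mp
      ((CharP.cast_eq_zero_iff K p 3).mp this)
    exact hp3 this
  -- Frobenius
  set φ : K →+* K := iterateFrobenius K p m with hφdef
  have hφ : ∀ x : K, φ x = x ^ q := fun x => by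
    rw [hφdef, iterateFrobenius_def, hq]
  have hφφ : ∀ x : K, φ (φ x) = x := fun x => by
    rw [hφ, hφ, ← pow_mul, ← pow_two, ← hK, FiniteField.pow_card]
  -- cube root of unity
  have hqpos : 0 < q := by omega
  have hq2pos : 1 ≤ q ^ 2 := Nat.one_le_pow _ _ hqpos
  have hq23 : q ^ 2 % 3 = 1 := by
    rw [Nat.pow_mod]
    have : q % 3 = 1 := by omega
    rw [this]
  haveI : Fact (Nat.Prime 3) := ⟨Nat.prime_three⟩
  have hdvd3 : 3 ∣ Fintype.card Kˣ := by
    rw [Fintype.card_units, hK]; omega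
  obtain ⟨ζ, hζ⟩ := exists_prime_orderOf_dvd_card 3 hdvd3
  set ω : K := (ζ : K) with hωdef
  have hω3 : ω ^ 3 = 1 := by
    have h1 := pow_orderOf_eq_one ζ
    rw [hζ] at h1
    rw [hωdef, ← Units.val_pow_eq_pow_val, h1, Units.val_one]
  have hζ1 : ζ ≠ 1 := by
    intro hh
    rw [hh, orderOf_one] at hζ
    omega
  have hω1 : ω ≠ 1 := by
    intro h
    rw [hωdef] at h
    exact hζ1 (Units.ext (by rw [Units.val_one]; exact h))
  have hs : ω^2 + ω + 1 = 0 := by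
    have h1 : (ω - 1) * (ω^2 + ω + 1) = 0 := by linear_combination hω3
    rcases mul_eq_zero.mp h1 with h' | h'
    · exact absurd (sub_eq_zero.mp h') hω1
    · exact h'
  have hωq : ω ^ q = ω := by
    obtain ⟨k, hk⟩ : ∃ k, q = 3*k+1 := ⟨q/3, by omega⟩
    rw [hk, pow_succ, pow_mul, hω3, one_pow, one_mul]
  set u : K := 2*ω + 1 with hudef
  have hu : u^2 = -3 := by rw [hudef]; linear_combination 4*hs
  have hφω : φ ω = ω := by rw [hφ, hωq]
  have hφu : φ u = u := by rw [hudef, map_add, map_mul, map_ofNat, hφω, map_one]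
  -- the function g
  have hgeq : ∀ y z : K, y^2 + 2*(y * φ y) = z^2 + 2*(z * φ z) → y = z ∨ y = -z :=
    fun y z h => core_alg φ hφφ u hu hφu h2K h3K y z h
  have heven : ∀ y : K, (-y)^2 + 2*((-y) * φ (-y)) = y^2 + 2*(y * φ y) := by
    intro y
    rw [map_neg]
    ring
  obtain ⟨C1, C2, C0⟩ := counting h2K (fun y : K => y^2 + 2*(y * φ y)) heven hgeq
  -- relate to the derivative function
  set c : K := (2:K)⁻¹ with hcdef
  have hc : (2:K) * c = 1 := mul_inv_cancel₀ h2K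
  have hφc : φ c = c := by
    have h1 : (2:K) * φ c = 1 := by
      rw [← map_ofNat φ 2, ← map_mul, hcdef, mul_inv_cancel₀ h2K, map_one]
    rw [hcdef]
    exact (inv_eq_of_mul_eq_one_right h1).symm
  have hDid : ∀ x : K, (x+1)^(q+2) - x^(q+2) = ((x+c)^2 + 2*((x+c) * φ (x+c))) + c^2 := by
    intro x
    have e1 : (x+1)^(q+2) = φ (x+1) * (x+1)^2 := by rw [pow_add, hφ]
    have e2 : x^(q+2) = φ x * x^2 := by rw [pow_add, hφ]
    rw [e1, e2, map_add, map_one, map_add, hφc]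
    linear_combination (-(2*x + φ x + 1 + 2*c)) * hc
  have fib_eq : ∀ b : K, Nat.card {x : K // (x+1)^(q+2) - x^(q+2) = b}
      = Nat.card {x : K // x^2 + 2*(x * φ x) = b - c^2} := by
    intro b
    apply Nat.card_congr
    refine Equiv.subtypeEquiv (Equiv.addRight c) ?_
    intro x
    simp only [Equiv.coe_addRight]
    rw [hDid x]
    exact eq_sub_iff_add_eq.symm
  have outer_eq : ∀ i : ℕ,
      Nat.card {b : K // Nat.card {x : K // (x+1)^(q+2) - x^(q+2) = b} = i}
      = Nat.card {b : K // Nat.card {x : K // x^2 + 2*(x * φ x) = b} = i} := by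
    intro i
    apply Nat.card_congr
    refine Equiv.subtypeEquiv (Equiv.subRight (c^2)) ?_
    intro b
    rw [fib_eq b]
    simp only [Equiv.subRight_apply]
  refine ⟨?_, ?_, ?_⟩
  · rw [outer_eq 1]; exact C1
  · rw [outer_eq 2, ← hK]; exact C2
  · rw [outer_eq 0, ← hK]; exact C0
end
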